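/- arXiv:2101.12060 — 6 statements merged into one kernel-verified Lean document; each statement's English description precedes it below -/
import Mathlib

section
/- For all n ≥ 1, the number of regions of the threshold arrangement, given by 2(a(n) − n·a(n−1)) where a(n) is the n-th ordered Bell number, equals the sum over k from 1 to n−1 of 2^k·(n−k)·A(n−1,k−1), where A(m,j) denotes the Eulerian number counting permutations of [m] with j descents. -/
open Finset

/-- Stirling numbers of the second kind. -/
def stirling : ℕ → ℕ → ℕ
  | 0, 0 => 1
  | 0, _ + 1 => 0
  | _ + 1, 0 => 0
  | n + 1, k + 1 => (k + 1) * stirling n (k + 1) + stirling n k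

/-- The ordered Bell (Fubini) numbers. -/
def fubini (n : ℕ) : ℕ := ∑ k ∈ Finset.range (n + 1), k.factorial * stirling n k

/-- Eulerian numbers `A(n,k)`: permutations of `[n]` with `k` descents. -/
def eulerian : ℕ → ℕ → ℕ
  | 0, 0 => 1
  | 0, _ + 1 => 0
  | _ + 1, 0 => 1
  | n + 1, k + 1 => (n + 1 - (k + 1)) * eulerian n k + (k + 2) * eulerian n (k + 1)

/-- `L` is an ordered set partition of `Fin n`: a list of nonempty, pairwise
disjoint blocks whose union is everything. -/
def IsOSP {n : ℕ} (L : List (Finset (Fin n))) : Prop :=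
  (∀ B ∈ L, B.Nonempty) ∧ L.Pairwise Disjoint ∧ ∀ x : Fin n, ∃ B ∈ L, x ∈ B

open Nat

/-! Summing Worpitzky's identity `(n - m)! S(n, n - m) = ∑ⱼ A(n, j) C(j, m)` over `m` gives
`a(n) = ∑ⱼ A(n, j) 2^j`. The Eulerian recurrence, after a shift of index, rewrites
`∑ⱼ A(n + 1, j) f(j)` as `∑ⱼ A(n, j) ((n - j) f(j + 1) + (j + 1) f(j))`; with `f(j) = 2^j` this
makes `2 (a(n + 1) - (n + 1) a(n)) = ∑ⱼ 2^(j+1) (n - j) A(n, j)`, which is the claim after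
reindexing `k = j + 1`. -/

lemma stirling_eq_zero_of_lt {n k : ℕ} (h : n < k) : stirling n k = 0 := by
  induction n generalizing k with
  | zero => obtain ⟨k, rfl⟩ := exists_eq_succ_of_ne_zero (by omega : k ≠ 0); rfl
  | succ n ih =>
    obtain ⟨k, rfl⟩ := exists_eq_succ_of_ne_zero (by omega : k ≠ 0)
    simp [stirling, ih (by omega : n < k + 1), ih (by omega : n < k)]

lemma eulerian_zero_right (n : ℕ) : eulerian n 0 = 1 := by
  cases n <;> rfl

lemma eulerian_succ_succ (n k : ℕ) :
    eulerian (n + 1) (k + 1) = (n - k) * eulerian n k + (k + 2) * eulerian n (k + 1) := by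
  rw [eulerian, Nat.add_sub_add_right]

lemma eulerian_eq_zero_of_le {n k : ℕ} (hk : k ≠ 0) (h : n ≤ k) : eulerian n k = 0 := by
  induction n generalizing k with
  | zero => obtain ⟨k, rfl⟩ := exists_eq_succ_of_ne_zero hk; rfl
  | succ n ih =>
    obtain ⟨k, rfl⟩ := exists_eq_succ_of_ne_zero hk
    rw [eulerian_succ_succ, Nat.sub_eq_zero_of_le (by omega), ih k.succ_ne_zero (by omega)]
    simp

theorem sum_eulerian_succ_mul {R : Type*} [CommSemiring R] (n : ℕ) (f : ℕ → R) :
    ∑ j ∈ range (n + 2), (eulerian (n + 1) j : R) * f j =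
      ∑ j ∈ range (n + 1), (eulerian n j : R) * ((n - j : ℕ) * f (j + 1) + (j + 1) * f j) := by
  have shift : ∑ j ∈ range (n + 1), (eulerian n (j + 1) : R) * ((j + 1 + 1) * f (j + 1)) + f 0 =
      ∑ j ∈ range (n + 1), (eulerian n j : R) * ((j + 1) * f j) := by
    have h := sum_range_succ' (fun j => (eulerian n j : R) * ((j + 1) * f j)) (n + 1)
    rw [sum_range_succ, eulerian_eq_zero_of_le n.succ_ne_zero n.le_succ] at h
    simpa [eulerian_zero_right] using h.symm
  rw [sum_range_succ', eulerian_zero_right]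
  simp only [mul_add, sum_add_distrib, ← shift, Nat.cast_one, one_mul, ← add_assoc,
    eulerian_succ_succ]
  congr 1
  rw [← sum_add_distrib]
  refine sum_congr rfl fun j _ => ?_
  push_cast
  ring

lemma sub_mul_choose_succ_add_succ_mul_choose {n j : ℕ} (m : ℕ) (hj : j ≤ n) :
    (n - j) * (j + 1).choose m + (j + 1) * j.choose m = (n + 1 - m) * (j + 1).choose m := by
  rcases le_or_gt m (j + 1) with hm | hm
  · rw [mul_comm (j + 1), choose_mul_succ_eq, mul_comm _ (j + 1 - m), ← add_mul]
    congr 1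
    omega
  · simp [choose_eq_zero_of_lt hm, choose_eq_zero_of_lt (by omega : j < m)]

theorem factorial_mul_stirling_eq_sum_eulerian_mul_choose {n m : ℕ} (h : m ≤ n) :
    (n - m)! * stirling n (n - m) = ∑ j ∈ range (n + 1), eulerian n j * j.choose m := by
  induction n generalizing m with
  | zero =>
    obtain rfl : m = 0 := by omega
    rfl
  | succ n ih =>
    have step : ∑ j ∈ range (n + 2), eulerian (n + 1) j * j.choose m =
        (n + 1 - m) * ∑ j ∈ range (n + 1), eulerian n j * (j + 1).choose m := by
      have h := sum_eulerian_succ_mul n (fun j => j.choose m)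
      simp only [Nat.cast_id] at h
      rw [h, mul_sum]
      refine sum_congr rfl fun j hj => ?_
      rw [sub_mul_choose_succ_add_succ_mul_choose m (mem_range_succ_iff.mp hj)]
      ring
    rw [step]
    rcases m with _ | m
    · have hn := ih (zero_le n)
      simp only [Nat.sub_zero, choose_zero_right, mul_one] at hn ⊢
      rw [stirling, stirling_eq_zero_of_lt n.lt_succ_self, factorial_succ, ← hn]
      ring
    obtain rfl | hm : m = n ∨ m < n := by omega
    · simp [stirling]
    obtain ⟨k, hk⟩ : ∃ k, n - m = k + 1 := ⟨n - (m + 1), by omega⟩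
    have pascal : ∑ j ∈ range (n + 1), eulerian n j * (j + 1).choose (m + 1) =
        ∑ j ∈ range (n + 1), eulerian n j * j.choose m +
          ∑ j ∈ range (n + 1), eulerian n j * j.choose (m + 1) := by
      simp only [choose_succ_succ', mul_add, sum_add_distrib]
    rw [pascal, ← ih hm.le, ← ih (Nat.succ_le_of_lt hm), hk,
      show n + 1 - (m + 1) = k + 1 by omega, show n - (m + 1) = k by omega, stirling,
      factorial_succ]
    ring

theorem fubini_eq_sum_eulerian_mul_two_pow (n : ℕ) :
    fubini n = ∑ j ∈ range (n + 1), eulerian n j * 2 ^ j := by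
  rw [fubini, ← sum_range_reflect]
  calc ∑ m ∈ range (n + 1), (n + 1 - 1 - m)! * stirling n (n + 1 - 1 - m)
      = ∑ m ∈ range (n + 1), ∑ j ∈ range (n + 1), eulerian n j * j.choose m :=
        sum_congr rfl fun m hm =>
          factorial_mul_stirling_eq_sum_eulerian_mul_choose (mem_range_succ_iff.mp hm)
    _ = ∑ j ∈ range (n + 1), eulerian n j * 2 ^ j := by
        rw [sum_comm]
        refine sum_congr rfl fun j hj => ?_
        rw [← mul_sum, ← sum_range_choose]
        refine congrArg _ (sum_subset (range_subset_range.2 ?_) fun i _ hi => ?_).symm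
        · exact mem_range.mp hj
        · exact choose_eq_zero_of_lt (by simpa using hi)

theorem threshold_regions_eq_eulerian_sum (n : ℕ) (hn : 1 ≤ n) :
    2 * ((fubini n : ℤ) - n * fubini (n - 1)) =
      ∑ k ∈ Finset.Icc 1 (n - 1),
        (2 : ℤ) ^ k * ((n : ℤ) - k) * (eulerian (n - 1) (k - 1) : ℤ) := by
  obtain ⟨m, rfl⟩ : ∃ m, n = m + 1 := ⟨n - 1, by omega⟩
  have reindex : ∑ k ∈ Icc 1 m, (2 : ℤ) ^ k * ((m + 1 : ℕ) - k) * (eulerian m (k - 1) : ℤ) =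
      ∑ j ∈ range (m + 1), (2 : ℤ) ^ (j + 1) * ((m : ℤ) - j) * eulerian m j := by
    rw [sum_range_succ, sub_self, mul_zero, zero_mul, add_zero, ← Ico_add_one_right_eq_Icc,
      sum_Ico_eq_sum_range, Nat.add_sub_cancel]
    refine sum_congr rfl fun j _ => ?_
    rw [add_comm 1 j, Nat.add_sub_cancel]
    push_cast
    ring
  rw [Nat.add_sub_cancel, reindex, fubini_eq_sum_eulerian_mul_two_pow,
    fubini_eq_sum_eulerian_mul_two_pow]
  push_cast
  rw [sum_eulerian_succ_mul, mul_sum, ← sum_sub_distrib, mul_sum]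
  refine sum_congr rfl fun j hj => ?_
  rw [Nat.cast_sub (mem_range_succ_iff.mp hj)]
  ring
end

section
/- For n ≥ 2, the function f from Z/(q−2) to (Z/q) \ {(q−1)/2, −(q−1)/2} defined by sending the residue of i (for i in the interval [−(q−3)/2, (q−3)/2]) to the residue of i mod q, for odd q ≥ 5, is a bijection that preserves and reflects the relations 'a+b=0', 'a−b=0', and 'a=0'; that is, a+b=0 in Z/(q−2) iff f(a)+f(b)=0 in Z/q, a−b=0 iff f(a)−f(b)=0, and a=0 iff f(a)=0. -/
open Finset

/-!
Write `q = 2k + 1`, so that `q - 2 = 2k - 1`. Every residue `a` mod `q - 2` has a symmetric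
representative `a.valMinAbs` with `|a.valMinAbs| ≤ k - 1`, and the residues mod `q` other than
`±k` are exactly those with such a representative. For integers `x, y` with `2|x|, 2|y| < N` we
have `|x - y| < N`, so `x ≡ y` mod `N` iff `x = y`; applied with `N = q - 2` and `N = q`, this
turns each of the relations `a + b = 0`, `a - b = 0`, `a = 0` into the same equation between
integers.
-/

namespace ZMod

variable {m q : ℕ}

theorem intCast_eq_intCast_iff_of_two_mul_abs_lt {x y : ℤ} (hx : 2 * |x| < q)
    (hy : 2 * |y| < q) : (x : ZMod q) = y ↔ x = y := by
  have hxy : |x - y| < q := by linarith [abs_sub x y]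
  rw [← sub_eq_zero, ← Int.cast_sub, intCast_zmod_eq_zero_iff_dvd]
  refine ⟨fun h => sub_eq_zero.mp (Int.eq_zero_of_abs_lt_dvd h hxy), ?_⟩
  rintro rfl
  simp

theorem valMinAbs_intCast_of_two_mul_abs_lt {x : ℤ} (hx : 2 * |x| < q) :
    (x : ZMod q).valMinAbs = x := by
  have hq : (0 : ℤ) < q := by linarith [abs_nonneg x]
  have : NeZero q := ⟨by omega⟩
  refine (valMinAbs_spec _ _).mpr ⟨rfl, ?_, ?_⟩ <;> cases abs_lt.mp (by linarith : |x| < q) <;>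
    linarith [le_abs_self x, neg_abs_le x]

theorem eq_intCast_iff_valMinAbs_eq {x : ZMod q} {y : ℤ} (hy : 2 * |y| < q) :
    x = y ↔ x.valMinAbs = y :=
  ⟨fun h => h ▸ valMinAbs_intCast_of_two_mul_abs_lt hy, fun h => h ▸ x.coe_valMinAbs.symm⟩

theorem two_mul_abs_valMinAbs_lt (hm : Odd m) (a : ZMod m) : 2 * |a.valMinAbs| < m := by
  have : NeZero m := ⟨hm.pos.ne'⟩
  have h := a.natAbs_valMinAbs_le
  obtain ⟨k, rfl⟩ := hm
  rw [Int.abs_eq_natAbs]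
  omega

theorem intCast_valMinAbs_eq_iff (hm : Odd m) (hmq : m ≤ q) {a : ZMod m} {y : ℤ}
    (hy : 2 * |y| < m) : (a.valMinAbs : ZMod q) = y ↔ a = y := by
  rw [intCast_eq_intCast_iff_of_two_mul_abs_lt (by linarith [two_mul_abs_valMinAbs_lt hm a])
    (by omega), ← intCast_eq_intCast_iff_of_two_mul_abs_lt (two_mul_abs_valMinAbs_lt hm a) hy,
    coe_valMinAbs]

theorem intCast_valMinAbs_add_eq_zero_iff (hm : Odd m) (hmq : m ≤ q) (a b : ZMod m) :
    (a.valMinAbs : ZMod q) + (b.valMinAbs : ZMod q) = 0 ↔ a + b = 0 := by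
  have hb : 2 * |-b.valMinAbs| < m := by rw [abs_neg]; exact two_mul_abs_valMinAbs_lt hm b
  rw [add_eq_zero_iff_eq_neg, add_eq_zero_iff_eq_neg, ← Int.cast_neg,
    intCast_valMinAbs_eq_iff hm hmq hb, Int.cast_neg, coe_valMinAbs]

theorem intCast_valMinAbs_sub_eq_zero_iff (hm : Odd m) (hmq : m ≤ q) (a b : ZMod m) :
    (a.valMinAbs : ZMod q) - (b.valMinAbs : ZMod q) = 0 ↔ a - b = 0 := by
  rw [sub_eq_zero, sub_eq_zero, intCast_valMinAbs_eq_iff hm hmq (two_mul_abs_valMinAbs_lt hm b),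
    coe_valMinAbs]

theorem intCast_valMinAbs_eq_zero_iff (hm : Odd m) (hmq : m ≤ q) (a : ZMod m) :
    (a.valMinAbs : ZMod q) = 0 ↔ a = 0 := by
  simpa using intCast_valMinAbs_eq_iff hm hmq (a := a) (y := 0) (by simpa using hm.pos)

theorem bijOn_intCast_valMinAbs (hm : Odd m) (hmq : m ≤ q) :
    Set.BijOn (fun a : ZMod m => (a.valMinAbs : ZMod q)) Set.univ
      {x | 2 * |x.valMinAbs| < m} := by
  have hval (a : ZMod m) : ((a.valMinAbs : ZMod q)).valMinAbs = a.valMinAbs :=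
    valMinAbs_intCast_of_two_mul_abs_lt (by linarith [two_mul_abs_valMinAbs_lt hm a])
  refine ⟨fun a _ => ?_, fun a _ b _ hab => ?_, fun x hx => ?_⟩
  · simpa [hval] using two_mul_abs_valMinAbs_lt hm a
  · exact sub_eq_zero.mp ((intCast_valMinAbs_sub_eq_zero_iff hm hmq a b).mp (sub_eq_zero.mpr hab))
  · refine ⟨(x.valMinAbs : ZMod m), trivial, ?_⟩
    simp only [valMinAbs_intCast_of_two_mul_abs_lt hx, coe_valMinAbs]

theorem two_mul_abs_valMinAbs_lt_sub_two_iff (hq : Odd q) (x : ZMod q) :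
    2 * |x.valMinAbs| < ((q - 2 : ℕ) : ℤ) ↔
      x ≠ (((q - 1) / 2 : ℕ) : ZMod q) ∧ x ≠ -(((q - 1) / 2 : ℕ) : ZMod q) := by
  have : NeZero q := ⟨hq.pos.ne'⟩
  obtain ⟨k, rfl⟩ := hq
  have hk : (2 * k + 1 - 1) / 2 = k := by omega
  have hbound := x.natAbs_valMinAbs_le
  have hk' : 2 * |(k : ℤ)| < (2 * k + 1 : ℕ) := by
    rw [abs_of_nonneg (by positivity)]
    omega
  rw [hk, ← Int.cast_natCast (R := ZMod (2 * k + 1)) k, ← Int.cast_neg, ne_eq, ne_eq,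
    eq_intCast_iff_valMinAbs_eq hk', eq_intCast_iff_valMinAbs_eq (by rwa [abs_neg]),
    Int.abs_eq_natAbs]
  omega

end ZMod

theorem valMinAbs_bijection_preserves_relations_general
    (q : ℕ) (hq : Odd q) (h5 : 5 ≤ q) :
    let f : ZMod (q - 2) → ZMod q := fun a => ((a.valMinAbs : ℤ) : ZMod q)
    Set.BijOn f Set.univ
        {x : ZMod q | x ≠ (((q - 1) / 2 : ℕ) : ZMod q) ∧
          x ≠ -(((q - 1) / 2 : ℕ) : ZMod q)} ∧
      (∀ a b : ZMod (q - 2), a + b = 0 ↔ f a + f b = 0) ∧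
      (∀ a b : ZMod (q - 2), a - b = 0 ↔ f a - f b = 0) ∧
      (∀ a : ZMod (q - 2), a = 0 ↔ f a = 0) := by
  intro f
  have hm : Odd (q - 2) := by obtain ⟨k, rfl⟩ := hq; exact ⟨k - 1, by omega⟩
  have hmq : q - 2 ≤ q := Nat.sub_le q 2
  have himage : {x : ZMod q | 2 * |x.valMinAbs| < ((q - 2 : ℕ) : ℤ)} =
      {x : ZMod q | x ≠ (((q - 1) / 2 : ℕ) : ZMod q) ∧ x ≠ -(((q - 1) / 2 : ℕ) : ZMod q)} :=
    Set.ext (ZMod.two_mul_abs_valMinAbs_lt_sub_two_iff hq)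
  exact ⟨himage ▸ ZMod.bijOn_intCast_valMinAbs hm hmq,
    fun a b => (ZMod.intCast_valMinAbs_add_eq_zero_iff hm hmq a b).symm,
    fun a b => (ZMod.intCast_valMinAbs_sub_eq_zero_iff hm hmq a b).symm,
    fun a => (ZMod.intCast_valMinAbs_eq_zero_iff hm hmq a).symm⟩

theorem valMinAbs_bijection_preserves_relations (n : ℕ) (hn : 2 ≤ n)
    (q : ℕ) (hq : Odd q) (h5 : 5 ≤ q) :
    let f : ZMod (q - 2) → ZMod q := fun a => ((a.valMinAbs : ℤ) : ZMod q)
    Set.BijOn f Set.univ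
        {x : ZMod q | x ≠ (((q - 1) / 2 : ℕ) : ZMod q) ∧
          x ≠ -(((q - 1) / 2 : ℕ) : ZMod q)} ∧
      (∀ a b : ZMod (q - 2), a + b = 0 ↔ f a + f b = 0) ∧
      (∀ a b : ZMod (q - 2), a - b = 0 ↔ f a - f b = 0) ∧
      (∀ a : ZMod (q - 2), a = 0 ↔ f a = 0) :=
  valMinAbs_bijection_preserves_relations_general q hq h5
end

section
/- For q an odd prime with q > 2n+3, the number of tuples (a_1,…,a_n) ∈ (Z/q)^n with a_i ≠ ±(q−1)/2 for all i and a_i + a_j ≠ 0 for all i < j equals the number of tuples (b_1,…,b_n) ∈ (Z/(q−2))^n with b_i + b_j ≠ 0 for all i < j, whenever q−2 is also prime (or more generally working over Z/(q−2) as a commutative ring). -/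
open Finset

/-!
Write `q = 2k + 1`. Centred representatives (`ZMod.valMinAbs`) identify both `ZMod q` with the
residues `±k` removed and `ZMod (q - 2)` with the integers in `(-k, k)`. Two such integers sum to
at most `2k - 2 < q - 2` in absolute value, so their sum vanishes modulo `q`, or modulo `q - 2`,
exactly when it vanishes in `ℤ`. Both sides therefore count the `n`-tuples of integers in
`(-k, k)` with no two entries summing to zero.
-/

section PairwiseTuples

variable {ι α β : Type*} [LT ι]

theorem Nat.card_pairwise_congr (e : α ≃ β) {r : α → α → Prop} {s : β → β → Prop}
    (hrs : ∀ x y, r x y ↔ s (e x) (e y)) :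
    Nat.card {a : ι → α // ∀ i j, i < j → r (a i) (a j)} =
      Nat.card {b : ι → β // ∀ i j, i < j → s (b i) (b j)} :=
  Nat.card_congr <| (Equiv.piCongrRight fun _ => e).subtypeEquiv fun _ =>
    forall₂_congr fun _ _ => imp_congr_right fun _ => hrs _ _

theorem Nat.card_forall_and_pairwise (p : α → Prop) (r : α → α → Prop) :
    Nat.card {a : ι → α // (∀ i, p (a i)) ∧ ∀ i j, i < j → r (a i) (a j)} =
      Nat.card {a : ι → Subtype p // ∀ i j, i < j → r (a i) (a j)} :=
  Nat.card_congr <| (Equiv.subtypeSubtypeEquivSubtypeInter _ _).symm.trans <|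
    Equiv.subtypePiEquivPi.subtypeEquiv fun _ => Iff.rfl

end PairwiseTuples

namespace ZMod

theorem add_eq_zero_iff_valMinAbs_add_eq_zero {N : ℕ} {x y : ZMod N}
    (h : (x.valMinAbs + y.valMinAbs).natAbs < N) :
    x + y = 0 ↔ x.valMinAbs + y.valMinAbs = 0 := by
  have hcast : x + y = ((x.valMinAbs + y.valMinAbs : ℤ) : ZMod N) := by
    push_cast [coe_valMinAbs]; rfl
  rw [hcast, intCast_zmod_eq_zero_iff_dvd]
  exact ⟨fun hd => Int.eq_zero_of_dvd_of_natAbs_lt_natAbs hd (by simpa),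
    fun hz => hz ▸ dvd_zero _⟩

section Box

variable {N : ℕ} [NeZero N]

theorem valMinAbs_intCast_of_two_mul_natAbs_lt {z : ℤ} (hz : 2 * z.natAbs < N) :
    (z : ZMod N).valMinAbs = z :=
  (valMinAbs_spec _ _).2 ⟨rfl, by omega, by omega⟩

theorem natAbs_valMinAbs_lt_of_lt_two_mul {k : ℕ} (hN : N < 2 * k) (x : ZMod N) :
    x.valMinAbs.natAbs < k := by
  have := natAbs_valMinAbs_le x
  omega

def valMinAbsEquivOfTwoMulLe (k : ℕ) (hk : 2 * k ≤ N + 1) :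
    {x : ZMod N // x.valMinAbs.natAbs < k} ≃ {z : ℤ // z.natAbs < k} where
  toFun x := ⟨x.1.valMinAbs, x.2⟩
  invFun z := ⟨z.1, by
    have := z.2
    rwa [valMinAbs_intCast_of_two_mul_natAbs_lt (by omega)]⟩
  left_inv x := Subtype.ext (coe_valMinAbs x.1)
  right_inv z :=
    Subtype.ext <| valMinAbs_intCast_of_two_mul_natAbs_lt (by have := z.2; omega)

theorem card_pairwise_add_ne_zero_eq_int {ι : Type*} [LT ι] (k : ℕ) (hk : 2 * k ≤ N + 1) :
    Nat.card {a : ι → {x : ZMod N // x.valMinAbs.natAbs < k} //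
        ∀ i j, i < j → (a i : ZMod N) + a j ≠ 0} =
      Nat.card {a : ι → {z : ℤ // z.natAbs < k} // ∀ i j, i < j → (a i : ℤ) + a j ≠ 0} :=
  Nat.card_pairwise_congr (r := fun x y => x.1 + y.1 ≠ 0) (s := fun z w => z.1 + w.1 ≠ 0)
    (valMinAbsEquivOfTwoMulLe k hk) fun x y =>
      not_congr <| add_eq_zero_iff_valMinAbs_add_eq_zero <| by
        have := x.2; have := y.2; omega

end Box

theorem natAbs_valMinAbs_lt_iff {k : ℕ} (x : ZMod (2 * k + 1)) :
    x.valMinAbs.natAbs < k ↔ x ≠ k ∧ x ≠ -k := by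
  have hk : (k : ZMod (2 * k + 1)).valMinAbs.natAbs = k := by
    rw [valMinAbs_natCast_of_le_half (by omega), Int.natAbs_natCast]
  rw [← not_or, ← natAbs_valMinAbs_eq_natAbs_valMinAbs, hk]
  have := natAbs_valMinAbs_le x
  omega

variable {ι : Type*} [LT ι]

theorem card_ne_half_pairwise_add_ne_zero_eq_int (k : ℕ) :
    Nat.card {a : ι → ZMod (2 * k + 1) //
        (∀ i, a i ≠ k ∧ a i ≠ -k) ∧ ∀ i j, i < j → a i + a j ≠ 0} =
      Nat.card {a : ι → {z : ℤ // z.natAbs < k} // ∀ i j, i < j → (a i : ℤ) + a j ≠ 0} := by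
  rw [Nat.card_forall_and_pairwise (fun x : ZMod (2 * k + 1) => x ≠ k ∧ x ≠ -k)
      fun x y => x + y ≠ 0,
    ← card_pairwise_add_ne_zero_eq_int (N := 2 * k + 1) k (by omega)]
  exact Nat.card_pairwise_congr
    (r := fun x y => x.1 + y.1 ≠ 0) (s := fun x y => x.1 + y.1 ≠ 0)
    (Equiv.subtypeEquivRight fun x => (natAbs_valMinAbs_lt_iff x).symm) fun _ _ => Iff.rfl

theorem card_pairwise_add_ne_zero_eq_int_of_add_one_eq_two_mul {N k : ℕ}
    (hN : N + 1 = 2 * k) :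
    Nat.card {a : ι → ZMod N // ∀ i j, i < j → a i + a j ≠ 0} =
      Nat.card {a : ι → {z : ℤ // z.natAbs < k} // ∀ i j, i < j → (a i : ℤ) + a j ≠ 0} := by
  have : NeZero N := ⟨by omega⟩
  rw [← card_pairwise_add_ne_zero_eq_int (N := N) k (by omega)]
  exact Nat.card_pairwise_congr
    (r := fun x y => x + y ≠ 0) (s := fun x y => x.1 + y.1 ≠ 0)
    (Equiv.subtypeUnivEquiv (natAbs_valMinAbs_lt_of_lt_two_mul (k := k) (by omega))).symm
    fun _ _ => Iff.rfl

end ZMod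

theorem boxed_point_count_eq_shrunk_point_count_general (n q : ℕ)
    (hodd : Odd q) (h : 2 * n + 3 < q) :
    Nat.card {a : Fin n → ZMod q //
        (∀ i : Fin n, a i ≠ (((q - 1) / 2 : ℕ) : ZMod q) ∧
          a i ≠ -(((q - 1) / 2 : ℕ) : ZMod q)) ∧
        ∀ i j : Fin n, i < j → a i + a j ≠ 0} =
      Nat.card {b : Fin n → ZMod (q - 2) // ∀ i j : Fin n, i < j → b i + b j ≠ 0} := by
  obtain ⟨k, rfl⟩ := hodd
  rw [show (2 * k + 1 - 1) / 2 = k by omega, ZMod.card_ne_half_pairwise_add_ne_zero_eq_int,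
    ZMod.card_pairwise_add_ne_zero_eq_int_of_add_one_eq_two_mul (N := 2 * k + 1 - 2) (k := k)
      (by omega)]

theorem boxed_point_count_eq_shrunk_point_count (n q : ℕ) (hq : q.Prime)
    (hodd : Odd q) (h : 2 * n + 3 < q) :
    Nat.card {a : Fin n → ZMod q //
        (∀ i : Fin n, a i ≠ (((q - 1) / 2 : ℕ) : ZMod q) ∧
          a i ≠ -(((q - 1) / 2 : ℕ) : ZMod q)) ∧
        ∀ i j : Fin n, i < j → a i + a j ≠ 0} =
      Nat.card {b : Fin n → ZMod (q - 2) // ∀ i j : Fin n, i < j → b i + b j ≠ 0} :=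
  boxed_point_count_eq_shrunk_point_count_general n q hodd h
end

section
/- For n ≥ 2, the number of alternating-signed ordered set partitions of [n] whose first block has size greater than 1 equals 2·(a(n) − n·a(n−1)), where a denotes the ordered Bell numbers. -/
open Finset

/-!
Choosing the first sign determines an alternating sign sequence, so the count is twice the number
of ordered set partitions of `[n]` whose first block has at least two elements. Splitting off the
first block `B` shows that the ordered set partitions of an `n`-set number
`∑_{B ≠ ∅} a(n - |B|)`, which equals `a(n)` by the binomial recurrence of `k! S(n, k)`; those whose
first block is a singleton therefore number `n a(n - 1)`.
-/

open Nat

theorem stirling_eq_stirlingSecond : stirling = Nat.stirlingSecond := by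
  funext n k
  induction n generalizing k with
  | zero => cases k <;> rfl
  | succ n ih => cases k <;> simp [stirling, stirlingSecond_succ_succ, ih]

theorem fubini_eq_sum_range_of_le {n m : ℕ} (h : n ≤ m) :
    fubini n = ∑ k ∈ range (m + 1), k ! * stirlingSecond n k := by
  rw [fubini, stirling_eq_stirlingSecond]
  refine sum_subset (range_subset_range.2 (by omega)) fun k hk hkn => ?_
  rw [stirlingSecond_eq_zero_of_lt (by simp only [mem_range] at hk hkn; omega), mul_zero]

theorem factorial_mul_stirlingSecond_succ_succ (n k : ℕ) :
    (k + 1)! * stirlingSecond (n + 1) (k + 1) =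
      (k + 1) * ((k + 1)! * stirlingSecond n (k + 1) + k ! * stirlingSecond n k) := by
  rw [stirlingSecond_succ_succ, factorial_succ]
  ring

/-- `k ! * stirlingSecond n k` counts ordered partitions of an `n`-set into `k` blocks; the left
side counts them preceded by an extra, possibly empty, block. -/
theorem sum_choose_mul_factorial_mul_stirlingSecond (n k : ℕ) :
    ∑ j ∈ range (n + 1), n.choose j * (k ! * stirlingSecond (n - j) k) =
      (k + 1)! * stirlingSecond n (k + 1) + k ! * stirlingSecond n k := by
  induction n generalizing k with
  | zero => simp
  | succ n ih =>
    have hsplit := sum_choose_succ_nsmul (fun _ m => k ! * stirlingSecond m k) n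
    simp only [smul_eq_mul] at hsplit
    have hshift : ∑ j ∈ range (n + 1), n.choose j * (k ! * stirlingSecond (n + 1 - j) k) =
        ∑ j ∈ range (n + 1), n.choose j * (k ! * stirlingSecond (n - j + 1) k) :=
      sum_congr rfl fun j hj => by rw [Nat.sub_add_comm (by simpa [Nat.lt_succ_iff] using hj)]
    rw [hsplit, hshift, ih]
    cases k with
    | zero => simp [stirlingSecond_succ_succ n 0]
    | succ k =>
      simp only [factorial_mul_stirlingSecond_succ_succ, mul_left_comm _ (k + 1), ← mul_sum,
        mul_add, sum_add_distrib, ih]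
      ring

theorem sum_choose_mul_fubini_sub {n : ℕ} (hn : n ≠ 0) :
    ∑ j ∈ range (n + 1), n.choose j * fubini (n - j) = 2 * fubini n := by
  have hshift : ∑ k ∈ range (n + 1), (k + 1)! * stirlingSecond n (k + 1) = fubini n := by
    rw [fubini_eq_sum_range_of_le (le_succ n), sum_range_succ' _ (n + 1), left_eq_add]
    obtain ⟨m, rfl⟩ := exists_eq_succ_of_ne_zero hn
    rw [stirlingSecond_succ_zero, mul_zero]
  calc ∑ j ∈ range (n + 1), n.choose j * fubini (n - j)
      = ∑ k ∈ range (n + 1), ∑ j ∈ range (n + 1),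
          n.choose j * (k ! * stirlingSecond (n - j) k) := by
        rw [sum_comm]
        refine sum_congr rfl fun j _ => ?_
        rw [fubini_eq_sum_range_of_le (Nat.sub_le n j), mul_sum]
    _ = ∑ k ∈ range (n + 1), ((k + 1)! * stirlingSecond n (k + 1) + k ! * stirlingSecond n k) := by
        simp only [sum_choose_mul_factorial_mul_stirlingSecond]
    _ = 2 * fubini n := by
        rw [sum_add_distrib, hshift, ← fubini_eq_sum_range_of_le le_rfl, two_mul]

theorem fubini_pos (n : ℕ) : 0 < fubini n := by
  rw [fubini_eq_sum_range_of_le le_rfl]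
  calc 0 < n ! * stirlingSecond n n := by simp [stirlingSecond_self, factorial_pos]
    _ ≤ _ := single_le_sum (f := fun k => k ! * stirlingSecond n k) (fun _ _ => Nat.zero_le _)
        (self_mem_range_succ n)

section OrderedSetPartition

variable {α : Type*}

def IsOSPOn (s : Finset α) (L : List (Finset α)) : Prop :=
  (∀ B ∈ L, B.Nonempty) ∧ L.Pairwise Disjoint ∧ (∀ B ∈ L, B ⊆ s) ∧ ∀ x ∈ s, ∃ B ∈ L, x ∈ B

theorem isOSPOn_nil_iff {s : Finset α} : IsOSPOn s [] ↔ s = ∅ := by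
  simp [IsOSPOn, eq_empty_iff_forall_notMem]

theorem IsOSPOn.ne_nil {s : Finset α} {L : List (Finset α)} (h : IsOSPOn s L)
    (hs : s.Nonempty) : L ≠ [] := by
  rintro rfl
  exact hs.ne_empty (isOSPOn_nil_iff.1 h)

theorem isOSP_iff_isOSPOn_univ {n : ℕ} {L : List (Finset (Fin n))} :
    IsOSP L ↔ IsOSPOn univ L := by
  simp [IsOSP, IsOSPOn]

variable [DecidableEq α]

theorem isOSPOn_cons_iff {s B : Finset α} {T : List (Finset α)} :
    IsOSPOn s (B :: T) ↔ B.Nonempty ∧ B ⊆ s ∧ IsOSPOn (s \ B) T := by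
  simp only [IsOSPOn, List.mem_cons, forall_eq_or_imp, exists_eq_or_imp, List.pairwise_cons]
  constructor
  · rintro ⟨⟨hB, hT⟩, ⟨hBT, hTT⟩, ⟨hBs, hTs⟩, hcov⟩
    refine ⟨hB, hBs, hT, hTT, fun C hC => ?_, fun x hx => ?_⟩
    · exact subset_sdiff.2 ⟨hTs C hC, (hBT C hC).symm⟩
    · rw [mem_sdiff] at hx
      exact (hcov x hx.1).resolve_left hx.2
  · rintro ⟨hB, hBs, hT, hTT, hTs, hcov⟩
    refine ⟨⟨hB, hT⟩, ⟨fun C hC => (subset_sdiff.1 (hTs C hC)).2.symm, hTT⟩,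
      ⟨hBs, fun C hC => (hTs C hC).trans sdiff_subset⟩, fun x hx => ?_⟩
    by_cases hxB : x ∈ B
    · exact Or.inl hxB
    · exact Or.inr (hcov x (mem_sdiff.2 ⟨hx, hxB⟩))

def firstBlockEquiv {s : Finset α} (hs : s.Nonempty) (q : Finset α → Prop) [DecidablePred q] :
    {L // IsOSPOn s L ∧ ∀ B, L.head? = some B → q B} ≃
      Σ B : {B ∈ s.powerset | B.Nonempty ∧ q B}, {T // IsOSPOn (s \ B) T} where
  toFun
    | ⟨[], h, _⟩ => absurd rfl (h.ne_nil hs)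
    | ⟨B :: T, h, hq⟩ =>
      have h' := isOSPOn_cons_iff.1 h
      ⟨⟨B, mem_filter.2 ⟨mem_powerset.2 h'.2.1, h'.1, hq B rfl⟩⟩, T, h'.2.2⟩
  invFun
    | ⟨⟨B, hB⟩, T, hT⟩ =>
      have hB' := mem_filter.1 hB
      ⟨B :: T, isOSPOn_cons_iff.2 ⟨hB'.2.1, mem_powerset.1 hB'.1, hT⟩, by simpa using hB'.2.2⟩
  left_inv := by
    rintro ⟨_ | ⟨B, T⟩, h, hq⟩
    · exact absurd rfl (h.ne_nil hs)
    · rfl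
  right_inv _ := rfl

theorem card_isOSPOn_head_eq_sum {s : Finset α} (hs : s.Nonempty) (q : Finset α → Prop)
    [DecidablePred q] (hfin : ∀ B ⊆ s, B.Nonempty → Finite {T // IsOSPOn (s \ B) T}) :
    Nat.card {L // IsOSPOn s L ∧ ∀ B, L.head? = some B → q B} =
      ∑ B ∈ s.powerset with B.Nonempty ∧ q B, Nat.card {T // IsOSPOn (s \ B) T} := by
  have (B : {B ∈ s.powerset | B.Nonempty ∧ q B}) : Finite {T // IsOSPOn (s \ B) T} :=
    hfin B (mem_powerset.1 (mem_filter.1 B.2).1) (mem_filter.1 B.2).2.1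
  rw [Nat.card_congr (firstBlockEquiv hs q), Nat.card_sigma,
    sum_coe_sort _ fun B => Nat.card {T // IsOSPOn (s \ B) T}]

theorem card_isOSPOn_eq_sum {s : Finset α} (hs : s.Nonempty)
    (hfin : ∀ B ⊆ s, B.Nonempty → Finite {T // IsOSPOn (s \ B) T}) :
    Nat.card {L // IsOSPOn s L} =
      ∑ B ∈ s.powerset with B.Nonempty, Nat.card {T // IsOSPOn (s \ B) T} := by
  have h := card_isOSPOn_head_eq_sum hs (fun _ => True) hfin
  rw [filter_congr fun (B : Finset α) _ => and_iff_left trivial] at h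
  simpa only [implies_true, and_true] using h

theorem sum_powerset_nonempty_add (s : Finset α) (f : ℕ → ℕ) :
    ∑ B ∈ s.powerset with B.Nonempty, f #B + f 0 = ∑ j ∈ range (#s + 1), (#s).choose j * f j := by
  have h := sum_powerset_apply_card f (x := s)
  simp only [smul_eq_mul] at h
  rw [← h, ← sum_filter_add_sum_filter_not s.powerset (·.Nonempty)]
  congr 1
  have : {B ∈ s.powerset | ¬B.Nonempty} = {∅} := by
    ext B
    simp only [mem_filter, mem_powerset, mem_singleton, not_nonempty_iff_eq_empty]
    exact ⟨And.right, fun h => ⟨h ▸ empty_subset s, h⟩⟩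
  rw [this, sum_singleton, card_empty]

theorem isOSPOn_empty_iff {L : List (Finset α)} : IsOSPOn ∅ L ↔ L = [] := by
  cases L with
  | nil => simp [isOSPOn_nil_iff]
  | cons B T =>
    simp only [isOSPOn_cons_iff, subset_empty, reduceCtorEq, iff_false]
    exact fun ⟨hB, hB0, _⟩ => hB.ne_empty hB0

theorem card_isOSPOn (s : Finset α) : Nat.card {L // IsOSPOn s L} = fubini #s := by
  induction s using Finset.strongInduction with
  | H s ih =>
  rcases s.eq_empty_or_nonempty with rfl | hs
  · simp only [isOSPOn_empty_iff, Nat.card_unique, card_empty]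
    rfl
  have hcard (B) (hB : B ⊆ s) (hB' : B.Nonempty) :
      Nat.card {T // IsOSPOn (s \ B) T} = fubini (#s - #B) := by
    rw [ih _ (sdiff_ssubset hB hB'), card_sdiff_of_subset hB]
  have hrec := sum_powerset_nonempty_add s fun j => fubini (#s - j)
  rw [sum_choose_mul_fubini_sub (card_ne_zero.2 hs), Nat.sub_zero, two_mul] at hrec
  rw [card_isOSPOn_eq_sum hs fun B hB hB' =>
      Nat.finite_of_card_ne_zero (by rw [hcard B hB hB']; exact (fubini_pos _).ne'),
    sum_congr rfl fun B hB => hcard B (mem_powerset.1 (mem_filter.1 hB).1) (mem_filter.1 hB).2]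
  exact Nat.add_right_cancel hrec

instance (s : Finset α) : Finite {L // IsOSPOn s L} :=
  Nat.finite_of_card_ne_zero ((card_isOSPOn s).trans_ne (fubini_pos _).ne')

theorem card_isOSPOn_head_one_lt_add {s : Finset α} (hs : s.Nonempty) :
    Nat.card {L // IsOSPOn s L ∧ ∀ B, L.head? = some B → 1 < #B} + #s * fubini (#s - 1) =
      fubini #s := by
  have hsingle : {B ∈ s.powerset | B.Nonempty ∧ ¬1 < #B} = powersetCard 1 s := by
    ext B
    simp only [mem_filter, mem_powerset, mem_powersetCard, ← card_pos]
    exact and_congr_right fun _ => by omega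
  have hsplit := sum_filter_add_sum_filter_not {B ∈ s.powerset | B.Nonempty} (1 < #·)
    fun B => Nat.card {T // IsOSPOn (s \ B) T}
  rw [filter_filter, filter_filter, hsingle] at hsplit
  rw [card_isOSPOn_head_eq_sum hs _ fun _ _ _ => inferInstance, ← card_isOSPOn s,
    card_isOSPOn_eq_sum hs fun _ _ _ => inferInstance, ← hsplit]
  congr 1
  rw [sum_congr rfl fun B hB => by rw [card_isOSPOn, card_sdiff_of_subset (mem_powersetCard.1 hB).1,
      (mem_powersetCard.1 hB).2], sum_const, card_powersetCard, choose_one_right, smul_eq_mul]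

end OrderedSetPartition

theorem List.isChain_ne_iterate_not (b : Bool) (k : ℕ) :
    (List.iterate not b k).IsChain (· ≠ ·) := by
  rw [List.isChain_iff_getElem]
  intro i _
  simp only [List.getElem_iterate, Function.iterate_succ_apply']
  exact (Bool.not_ne_self _).symm

theorem List.IsChain.eq_iterate_not {l : List Bool} (hl : l.IsChain (· ≠ ·)) (hl0 : l ≠ []) :
    l = List.iterate not (l.head hl0) l.length := by
  have hnot : l.IsChain (fun x y => (!x) = y) := hl.imp fun x y h => by
    cases x <;> cases y <;> simp_all
  refine List.ext_getElem (List.length_iterate ..).symm fun i h _ => ?_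
  rw [List.getElem_iterate, ← hnot.iterate_eq_of_apply_eq i h, List.head_eq_getElem]

def alternatingSignsEquiv {k : ℕ} (hk : k ≠ 0) :
    {l : List Bool // l.length = k ∧ l.IsChain (· ≠ ·)} ≃ Bool where
  toFun l := l.1.head (List.ne_nil_of_length_pos (Nat.pos_of_ne_zero (l.2.1.trans_ne hk)))
  invFun b := ⟨List.iterate not b k, List.length_iterate .., List.isChain_ne_iterate_not b k⟩
  left_inv := by
    rintro ⟨l, rfl, hl⟩
    exact Subtype.ext (hl.eq_iterate_not _).symm
  right_inv b := by
    obtain ⟨k, rfl⟩ := Nat.exists_eq_succ_of_ne_zero hk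
    rfl

theorem card_alternatingSigned {X : Type*} (P : List X → Prop) (hP : ∀ L, P L → L ≠ []) :
    Nat.card {p : List X × List Bool // P p.1 ∧ p.2.length = p.1.length ∧ p.2.IsChain (· ≠ ·)} =
      Nat.card {L // P L} * 2 := by
  calc _ = Nat.card (Σ L : {L // P L},
        {l : List Bool // l.length = L.1.length ∧ l.IsChain (· ≠ ·)}) :=
        Nat.card_congr
          { toFun p := ⟨⟨p.1.1, p.2.1⟩, p.1.2, p.2.2⟩
            invFun x := ⟨(x.1.1, x.2.1), x.1.2, x.2.2⟩ }
    _ = Nat.card ({L // P L} × Bool) :=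
        Nat.card_congr <| (Equiv.sigmaCongrRight fun L => alternatingSignsEquiv fun h =>
          hP L.1 L.2 (List.length_eq_zero_iff.1 h)).trans (Equiv.sigmaEquivProd _ _)
    _ = _ := by rw [Nat.card_prod, Nat.card_eq_fintype_card (α := Bool), Fintype.card_bool]

theorem card_alternating_signed_osp_first_block_big (n : ℕ) (hn : 2 ≤ n) :
    (Nat.card {p : List (Finset (Fin n)) × List Bool //
        IsOSP p.1 ∧ p.2.length = p.1.length ∧ p.2.Chain' (· ≠ ·) ∧
          ∀ B, p.1.head? = some B → 1 < B.card} : ℤ) =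
      2 * ((fubini n : ℤ) - n * fubini (n - 1)) := by
  have huniv : (univ : Finset (Fin n)).Nonempty := univ_nonempty_iff.2 ⟨⟨0, by omega⟩⟩
  have hcount := card_isOSPOn_head_one_lt_add huniv
  rw [Finset.card_fin] at hcount
  calc _ = ((Nat.card {L // IsOSPOn univ L ∧ ∀ B, L.head? = some B → 1 < #B} * 2 : ℕ) : ℤ) := by
        rw [← card_alternatingSigned _ fun L h => h.1.ne_nil huniv]
        exact congrArg _ (Nat.card_congr (Equiv.subtypeEquivRight fun p => by
          rw [isOSP_iff_isOSPOn_univ]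
          tauto))
    _ = _ := by
        rw [← hcount]
        push_cast
        ring
end

section
/- For n ≥ 2, the total count 4·a(n) + ∑_{k=1}^{n} 4·(k! − (k−1)!)·(k·S(n,k) − n·S(n−1,k−1)) equals the number of labeled colored threshold graphs on n vertices, which can be encoded as: the number of triples consisting of an ordered set partition of [n] with alternating signs that is of one of the three types (i) all blocks after the marker ½ placed at the start; (ii) first block size > 1 with ½ placed after any of the k blocks; (iii) first block a singleton, ½ placed immediately after it, first and second blocks with the same sign, remaining consecutive blocks alternating. -/
open Finset

/-- Regions of the boxed threshold arrangement, encoded as ordered set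
partitions with signs and a marker position `m` (the position of `½`),
of one of the three types. -/
def IsBoxedThresholdOrder {n : ℕ} (p : List (Finset (Fin n)) × List Bool × ℕ) : Prop :=
  IsOSP p.1 ∧ p.2.1.length = p.1.length ∧ p.2.2 ≤ p.1.length ∧
    ((p.2.2 = 0 ∧ p.2.1.Chain' (· ≠ ·)) ∨
      (1 ≤ p.2.2 ∧ (∀ B, p.1.head? = some B → 1 < B.card) ∧
        (p.2.1.take p.2.2).Chain' (· ≠ ·) ∧ (p.2.1.drop p.2.2).Chain' (· ≠ ·)) ∨
      (p.2.2 = 1 ∧ (∀ B, p.1.head? = some B → B.card = 1) ∧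
        (∃ b, p.2.1.head? = some b ∧ p.2.1.tail.head? = some b) ∧
        p.2.1.tail.Chain' (· ≠ ·)))

/-!
Forgetting signs and marker, a boxed threshold order is an ordered set partition of `Fin n`,
i.e. a surjection `Fin n → Fin k`; there are `k! S(n,k)` of them. A sign list in which
consecutive signs differ is determined by its first sign, so the admissible decorations of a
partition with `k` blocks number `4k` when its first block has at least two elements (types
(i) and (ii) together) and `4` when it is a singleton (types (i) and (iii); then `k ≥ 2` as
`n ≥ 2`).
Partitions whose first block is a singleton number `n (k-1)! S(n-1,k-1)`, and summing
`4k · k! S(n,k) - 4(k-1) · n (k-1)! S(n-1,k-1)` over `k` gives the formula.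
-/

namespace BoxedThreshold

open Function

abbrev AlternatingSigns (k : ℕ) : Type :=
  {s : List Bool // s.length = k ∧ s.IsChain (· ≠ ·)}

instance (k : ℕ) : Finite (AlternatingSigns k) :=
  Set.Finite.to_subtype <| (List.finite_length_eq Bool k).subset fun _ hs => hs.1

lemma isChain_iterate_not (b : Bool) (k : ℕ) : (List.iterate not b k).IsChain (· ≠ ·) := by
  induction k generalizing b with
  | zero => exact List.isChain_nil
  | succ k ih =>
    cases k with
    | zero => exact List.isChain_singleton _
    | succ k => exact List.isChain_cons_cons.2 ⟨by cases b <;> decide, ih !b⟩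

lemma eq_iterate_not_of_isChain {s : List Bool} (hs : s.IsChain (· ≠ ·)) :
    s = List.iterate not s.headI s.length := by
  induction s with
  | nil => rfl
  | cons a t ih =>
    cases t with
    | nil => rfl
    | cons c t =>
      obtain ⟨hac, ht⟩ := List.isChain_cons_cons.1 hs
      have hc : c = !a := by revert hac; cases a <;> cases c <;> decide
      rw [ih ht, hc]
      simp [List.iterate]

def alternatingSignsEquivBool (k : ℕ) : AlternatingSigns (k + 1) ≃ Bool where
  toFun s := s.1.headI
  invFun b := ⟨List.iterate not b (k + 1), List.length_iterate .., isChain_iterate_not b _⟩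
  left_inv s := by
    ext1
    conv_rhs => rw [eq_iterate_not_of_isChain s.2.2, s.2.1]
  right_inv _ := rfl

lemma card_alternatingSigns_zero : Nat.card (AlternatingSigns 0) = 1 :=
  Nat.card_eq_one_iff_exists.2
    ⟨⟨[], rfl, List.isChain_nil⟩, fun s => Subtype.ext (List.length_eq_zero_iff.1 s.2.1)⟩

lemma card_alternatingSigns_succ (k : ℕ) : Nat.card (AlternatingSigns (k + 1)) = 2 := by
  rw [Nat.card_congr (alternatingSignsEquivBool k), Nat.card_eq_fintype_card, Fintype.card_bool]

/-- Signs `s` and marker position `m` decorating an ordered set partition with `k` blocks whose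
first block has `c` elements; the three disjuncts are the types (i), (ii), (iii). -/
def IsDecoration (k c : ℕ) (s : List Bool) (m : ℕ) : Prop :=
  s.length = k ∧ m ≤ k ∧
    ((m = 0 ∧ s.IsChain (· ≠ ·)) ∨
      (1 ≤ m ∧ 1 < c ∧ (s.take m).IsChain (· ≠ ·) ∧ (s.drop m).IsChain (· ≠ ·)) ∨
      (m = 1 ∧ c = 1 ∧ (∃ b, s.head? = some b ∧ s.tail.head? = some b) ∧
        s.tail.IsChain (· ≠ ·)))

abbrev Decorations (k c : ℕ) : Type := {d : List Bool × ℕ // IsDecoration k c d.1 d.2}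

instance (k c : ℕ) : Finite (Decorations k c) :=
  Set.Finite.to_subtype <| ((List.finite_length_eq Bool k).prod (Set.finite_Iic k)).subset
    fun _ hd => ⟨hd.1, hd.2.1⟩

lemma isBoxedThresholdOrder_iff {n : ℕ} (L : List (Finset (Fin n))) (s : List Bool) (m : ℕ) :
    IsBoxedThresholdOrder (L, s, m) ↔ IsOSP L ∧ IsDecoration L.length L.headI.card s m := by
  cases L with
  | nil =>
    simp only [IsBoxedThresholdOrder, IsDecoration, List.Chain', List.length_nil, Nat.le_zero]
    constructor <;> rintro ⟨h, h', rfl, _⟩ <;> simp_all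
  | cons B L => simp [IsBoxedThresholdOrder, IsDecoration, List.Chain']

/-- Type (i) is the case `m = 0` of type (ii): both split the signs into two alternating runs. -/
lemma isDecoration_iff_of_one_lt {k c : ℕ} (hc : 1 < c) (s : List Bool) (m : ℕ) :
    IsDecoration k c s m ↔ s.length = k ∧ m ≤ k ∧
      (s.take m).IsChain (· ≠ ·) ∧ (s.drop m).IsChain (· ≠ ·) := by
  rcases Nat.eq_zero_or_pos m with rfl | hm
  · simp [IsDecoration]
  · simp [IsDecoration, hc, Nat.one_le_iff_ne_zero.2 hm.ne', show m ≠ 0 by omega]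
    omega

def decorationsEquivOfOneLt {k c : ℕ} (hc : 1 < c) :
    Decorations k c ≃ Σ m : Fin (k + 1), AlternatingSigns m × AlternatingSigns (k - m) where
  toFun d :=
    have hd := (isDecoration_iff_of_one_lt hc _ _).1 d.2
    ⟨⟨d.1.2, by omega⟩, ⟨d.1.1.take d.1.2, by simp [hd.1]; omega, hd.2.2.1⟩,
      ⟨d.1.1.drop d.1.2, by simp [hd.1], hd.2.2.2⟩⟩
  invFun q := ⟨(q.2.1.1 ++ q.2.2.1, q.1), (isDecoration_iff_of_one_lt hc _ _).2
    ⟨by simp [q.2.1.2.1, q.2.2.2.1]; omega, by omega,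
      by simpa [List.take_left' q.2.1.2.1] using q.2.1.2.2,
      by simpa [List.drop_left' q.2.1.2.1] using q.2.2.2.2⟩⟩
  left_inv d := Subtype.ext (Prod.ext (List.take_append_drop _ _) rfl)
  right_inv q := Sigma.ext rfl <| heq_of_eq <|
    Prod.ext (Subtype.ext (List.take_left' q.2.1.2.1)) (Subtype.ext (List.drop_left' q.2.1.2.1))

lemma card_decorations_of_one_lt {c : ℕ} (hc : 1 < c) (k : ℕ) :
    Nat.card (Decorations (k + 1) c) = 4 * (k + 1) := by
  rw [Nat.card_congr (decorationsEquivOfOneLt hc), Nat.card_sigma,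
    Fin.sum_univ_eq_sum_range
      (fun m => Nat.card (AlternatingSigns m × AlternatingSigns (k + 1 - m))),
    sum_range_succ, sum_range_succ']
  have hmiddle : ∀ i ∈ range k,
      Nat.card (AlternatingSigns (i + 1) × AlternatingSigns (k + 1 - (i + 1))) = 4 := by
    intro i hi
    obtain ⟨j, hj⟩ : ∃ j, k + 1 - (i + 1) = j + 1 := ⟨k - i - 1, by simp at hi; omega⟩
    rw [hj, Nat.card_prod, card_alternatingSigns_succ, card_alternatingSigns_succ]
  rw [sum_congr rfl hmiddle]
  simp only [sum_const, card_range, smul_eq_mul, Nat.card_prod, Nat.sub_self, Nat.sub_zero,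
    card_alternatingSigns_zero, card_alternatingSigns_succ]
  ring

def decorationsOneEquiv (k : ℕ) :
    Decorations (k + 2) 1 ≃ AlternatingSigns (k + 2) ⊕ AlternatingSigns (k + 1) where
  toFun d :=
    if h : d.1.2 = 0 then
      .inl ⟨d.1.1, d.2.1, by
        obtain ⟨-, -, ⟨-, hs⟩ | ⟨hm, -⟩ | ⟨hm, -⟩⟩ := d.2
        exacts [hs, by omega, by omega]⟩
    else
      .inr ⟨d.1.1.tail, by simp [d.2.1], by
        obtain ⟨-, -, ⟨hm, -⟩ | ⟨-, hc, -⟩ | ⟨-, -, -, hs⟩⟩ := d.2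
        exacts [by omega, by omega, hs]⟩
  invFun
    | .inl s => ⟨(s.1, 0), s.2.1, by omega, .inl ⟨rfl, s.2.2⟩⟩
    | .inr t => ⟨(t.1.headI :: t.1, 1), by simp [t.2.1], by omega, .inr <| .inr ⟨rfl, rfl,
        ⟨t.1.headI, rfl, by
          obtain ⟨b, t', ht⟩ := List.exists_cons_of_length_eq_add_one t.2.1
          simp [ht]⟩,
        t.2.2⟩⟩
  left_inv := by
    rintro ⟨⟨s, m⟩, hlen, -, hd⟩
    dsimp only at hlen hd
    rcases hd with ⟨rfl, -⟩ | ⟨-, hc, -⟩ | ⟨rfl, -, ⟨b, hb, hb'⟩, -⟩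
    · simp
    · omega
    · obtain ⟨a, t, rfl⟩ := List.exists_cons_of_length_eq_add_one hlen
      obtain ⟨c, t, rfl⟩ := List.exists_cons_of_length_eq_add_one (by simpa using hlen)
      simp only [List.head?_cons, List.tail_cons, Option.some.injEq] at hb hb'
      simp [hb, hb']
  right_inv
    | .inl s => by simp
    | .inr t => by simp

lemma card_decorations_one (k : ℕ) : Nat.card (Decorations (k + 2) 1) = 4 := by
  rw [Nat.card_congr (decorationsOneEquiv k), Nat.card_sum, card_alternatingSigns_succ,
    card_alternatingSigns_succ]

section Surjections

variable {α β γ δ : Type*}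

lemma card_surjective_congr (e₁ : α ≃ γ) (e₂ : β ≃ δ) :
    Nat.card {f : α → β // Surjective f} = Nat.card {f : γ → δ // Surjective f} :=
  Nat.card_congr <| (e₁.arrowCongr e₂).subtypeEquiv fun f => by
    change Surjective f ↔ Surjective (e₂ ∘ f ∘ e₁.symm)
    rw [Equiv.comp_surjective, Equiv.surjective_comp]

lemma surjective_cons_iff {n : ℕ} (c : β) (g : Fin n → β) :
    Surjective (Fin.cons c g : Fin (n + 1) → β) ↔ ∀ y ≠ c, y ∈ Set.range g := by
  simp only [← Set.range_eq_univ, Fin.range_cons, Set.eq_univ_iff_forall, Set.mem_insert_iff]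
  exact forall_congr' fun y => or_iff_not_imp_left

lemma card_surjective_fin_succ [Fintype β] (n : ℕ) :
    Nat.card {f : Fin (n + 1) → β // Surjective f} =
      ∑ c : β, Nat.card {g : Fin n → β // ∀ y ≠ c, y ∈ Set.range g} := by
  rw [← Nat.card_congr ((Fin.consEquiv fun _ => β).subtypeEquiv
      (p := fun p => Surjective (Fin.cons p.1 p.2)) fun _ => Iff.rfl),
    Nat.card_congr (Equiv.subtypeProdEquivSigmaSubtype fun c g => Surjective (Fin.cons c g)),
    Nat.card_sigma]
  exact sum_congr rfl fun c _ =>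
    Nat.card_congr (Equiv.subtypeEquivRight fun g => surjective_cons_iff c g)

def missingEquivSurjective (c : β) :
    {g : α → β // (∀ y ≠ c, y ∈ Set.range g) ∧ c ∉ Set.range g} ≃
      {g : α → {y // y ≠ c} // Surjective g} where
  toFun g := ⟨fun x => ⟨g.1 x, fun h => g.2.2 ⟨x, h⟩⟩, fun y => by
    obtain ⟨x, hx⟩ := g.2.1 y y.2
    exact ⟨x, Subtype.ext hx⟩⟩
  invFun g := ⟨fun x => g.1 x, fun y hy => by
      obtain ⟨x, hx⟩ := g.2 ⟨y, hy⟩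
      exact ⟨x, congrArg Subtype.val hx⟩,
    fun ⟨x, hx⟩ => (g.1 x).2 hx⟩
  left_inv _ := rfl
  right_inv _ := rfl

lemma card_forall_ne_mem_range [Finite α] [Finite β] (c : β) :
    Nat.card {g : α → β // ∀ y ≠ c, y ∈ Set.range g} =
      Nat.card {g : α → β // Surjective g} +
        Nat.card {g : α → {y // y ≠ c} // Surjective g} := by
  classical
  rw [← Nat.card_congr (missingEquivSurjective c), ← Nat.card_sum,
    ← Nat.card_congr (Equiv.sumCompl fun g : {g : α → β // ∀ y ≠ c, y ∈ Set.range g} =>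
      c ∈ Set.range g.1)]
  have e :=
    Equiv.subtypeSubtypeEquivSubtypeInter (fun g : α → β => ∀ y ≠ c, y ∈ Set.range g)
  refine Nat.card_congr <| Equiv.sumCongr ((e (c ∈ Set.range ·)).trans
    (Equiv.subtypeEquivRight fun g => ?_)) (e (c ∉ Set.range ·))
  refine ⟨fun h y => ?_, fun h => ⟨fun y _ => h y, h c⟩⟩
  by_cases hy : y = c
  exacts [hy ▸ h.2, h.1 y hy]

lemma card_surjective_fin (n k : ℕ) :
    Nat.card {f : Fin n → Fin k // Surjective f} = k.factorial * stirling n k := by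
  induction n generalizing k with
  | zero =>
    cases k with
    | zero =>
      exact Nat.card_eq_one_iff_exists.2
        ⟨⟨Fin.elim0, fun y => y.elim0⟩, fun f => Subtype.ext (funext fun x => x.elim0)⟩
    | succ k => exact Nat.card_eq_zero.2 <| .inl ⟨fun f => (f.2 0).choose.elim0⟩
  | succ n ih =>
    rw [card_surjective_fin_succ]
    cases k with
    | zero => simp [stirling]
    | succ k =>
      have hmissing (c : Fin (k + 1)) :
          Nat.card {g : Fin n → Fin (k + 1) // ∀ y ≠ c, y ∈ Set.range g} =
            (k + 1).factorial * stirling n (k + 1) + k.factorial * stirling n k := by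
        rw [card_forall_ne_mem_range,
          card_surjective_congr (Equiv.refl _) (finSuccAboveEquiv c).symm, ih, ih]
      simp only [hmissing, sum_const, card_univ, Fintype.card_fin, smul_eq_mul, stirling,
        Nat.factorial_succ]
      ring

def surjectiveFiberSingletonEquiv [DecidableEq α] (a : α) (b : β) :
    {f : α → β // Surjective f ∧ ∀ x, f x = b ↔ x = a} ≃
      {g : {x // x ≠ a} → {y // y ≠ b} // Surjective g} where
  toFun f := ⟨fun x => ⟨f.1 x, fun h => x.2 ((f.2.2 x).1 h)⟩, fun y => by
    obtain ⟨x, hx⟩ := f.2.1 y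
    exact ⟨⟨x, fun h => y.2 (hx ▸ (f.2.2 x).2 h)⟩, Subtype.ext hx⟩⟩
  invFun g := ⟨fun x => if h : x = a then b else g.1 ⟨x, h⟩, fun y => by
      by_cases hy : y = b
      · exact ⟨a, by simp [hy]⟩
      · obtain ⟨x, hx⟩ := g.2 ⟨y, hy⟩
        exact ⟨x, by simp [x.2, hx]⟩,
    fun x => by
      by_cases h : x = a
      · simp [h]
      · simp [h, (g.1 ⟨x, h⟩).2]⟩
  left_inv f := Subtype.ext <| funext fun x => by
    by_cases h : x = a
    · simp [h, (f.2.2 a).2 rfl]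
    · simp [h]
  right_inv g := Subtype.ext <| funext fun x => Subtype.ext (dif_neg x.2)

noncomputable def existsUniqueEquivSigma (b : β) :
    {f : α → β // Surjective f ∧ ∃! x, f x = b} ≃
      Σ a : α, {f : α → β // Surjective f ∧ ∀ x, f x = b ↔ x = a} where
  toFun f := ⟨f.2.2.exists.choose, f.1, f.2.1, fun x =>
    ⟨fun h => f.2.2.unique h f.2.2.exists.choose_spec,
      fun h => h ▸ f.2.2.exists.choose_spec⟩⟩
  invFun q := ⟨q.2.1, q.2.2.1, q.1, (q.2.2.2 q.1).2 rfl, fun x => (q.2.2.2 x).1⟩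
  left_inv _ := rfl
  right_inv := by
    rintro ⟨a, f, hf, hfa⟩
    refine Sigma.subtype_ext ((hfa _).1 ?_) rfl
    exact Exists.choose_spec (p := fun x => f x = b) _

lemma card_surjective_existsUnique_preimage (n k : ℕ) :
    Nat.card {f : Fin (n + 1) → Fin (k + 1) // Surjective f ∧ ∃! x, f x = 0} =
      (n + 1) * (k.factorial * stirling n k) := by
  rw [Nat.card_congr (existsUniqueEquivSigma 0), Nat.card_sigma,
    sum_congr rfl fun a _ => (Nat.card_congr (surjectiveFiberSingletonEquiv a 0)).trans
      (card_surjective_congr (finSuccAboveEquiv a).symm (finSuccAboveEquiv 0).symm)]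
  simp only [card_surjective_fin, sum_const, card_univ, Fintype.card_fin, smul_eq_mul]

end Surjections

section OrderedSetPartitions

variable {n k : ℕ}

def blockIndex (L : List (Finset (Fin n))) (x : Fin n) : ℕ := L.findIdx (x ∈ ·)

section

variable {L : List (Finset (Fin n))} (hL : IsOSP L)
include hL

lemma blockIndex_lt (x : Fin n) : blockIndex L x < L.length := by
  obtain ⟨B, hB, hx⟩ := hL.2.2 x
  exact List.findIdx_lt_length_of_exists ⟨B, hB, by simpa using hx⟩

lemma blockIndex_eq_iff (x : Fin n) {i : ℕ} (hi : i < L.length) :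
    blockIndex L x = i ↔ x ∈ L[i] := by
  rw [blockIndex, List.findIdx_eq hi]
  simp only [decide_eq_true_eq, decide_eq_false_iff_not, and_iff_left_iff_imp]
  exact fun hx j hj hxj =>
    disjoint_left.1 (List.pairwise_iff_getElem.1 hL.2.1 j i _ hi hj) hxj hx

lemma exists_blockIndex_eq {i : ℕ} (hi : i < L.length) : ∃ x, blockIndex L x = i := by
  obtain ⟨x, hx⟩ := hL.1 _ (L.getElem_mem hi)
  exact ⟨x, (blockIndex_eq_iff hL x hi).2 hx⟩

lemma length_le_of_isOSP : L.length ≤ n := by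
  simpa using Fintype.card_le_of_surjective
    (fun x : Fin n => (⟨blockIndex L x, blockIndex_lt hL x⟩ : Fin L.length))
    fun i => (exists_blockIndex_eq hL i.2).imp fun _ hx => Fin.ext hx

end

def blocks (f : Fin n → Fin k) : List (Finset (Fin n)) :=
  List.ofFn fun i => univ.filter (f · = i)

@[simp] lemma length_blocks (f : Fin n → Fin k) : (blocks f).length = k := List.length_ofFn

lemma isOSP_blocks {f : Fin n → Fin k} (hf : Surjective f) : IsOSP (blocks f) := by
  refine ⟨?_, ?_, fun x => ⟨_, List.mem_ofFn.2 ⟨f x, rfl⟩, by simp⟩⟩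
  · simp only [blocks, List.mem_ofFn, forall_exists_index]
    rintro _ i rfl
    obtain ⟨x, hx⟩ := hf i
    exact ⟨x, by simp [hx]⟩
  · refine List.pairwise_iff_getElem.2 fun i j hi hj hij => ?_
    simp only [blocks, List.getElem_ofFn, disjoint_left, mem_filter, mem_univ, true_and]
    exact fun x hx hx' => hij.ne (congrArg Fin.val (hx.symm.trans hx'))

lemma blockIndex_blocks {f : Fin n → Fin k} (hf : Surjective f) (x : Fin n) :
    blockIndex (blocks f) x = f x :=
  (blockIndex_eq_iff (isOSP_blocks hf) x (by simp)).2 (by simp [blocks])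

lemma headI_blocks (f : Fin n → Fin (k + 1)) : (blocks f).headI = univ.filter (f · = 0) := by
  simp [blocks, List.ofFn_succ]

def ospEquivSurjective (k : ℕ) :
    {L : List (Finset (Fin n)) // IsOSP L ∧ L.length = k} ≃
      {f : Fin n → Fin k // Surjective f} where
  toFun L := ⟨fun x => ⟨blockIndex L.1 x, (blockIndex_lt L.2.1 x).trans_eq L.2.2⟩, fun i =>
    (exists_blockIndex_eq L.2.1 (i.2.trans_eq L.2.2.symm)).imp fun _ hx => Fin.ext hx⟩
  invFun f := ⟨blocks f.1, isOSP_blocks f.2, length_blocks f.1⟩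
  left_inv L := by
    obtain ⟨L, hL, rfl⟩ := L
    refine Subtype.ext (List.ext_getElem (by simp) fun i hi _ => ?_)
    ext x
    simp [blocks, Fin.ext_iff, blockIndex_eq_iff hL x (by simpa using hi)]
  right_inv f := Subtype.ext <| funext fun x => Fin.ext (blockIndex_blocks f.2 x)

def ospEquivSigma (n : ℕ) :
    {L : List (Finset (Fin n)) // IsOSP L} ≃
      Σ k : Fin (n + 1), {f : Fin n → Fin k // Surjective f} :=
  (Equiv.sigmaFiberEquiv fun L : {L // IsOSP L} =>
    (⟨L.1.length, Nat.lt_succ_of_le (length_le_of_isOSP L.2)⟩ : Fin (n + 1))).symm.trans <|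
  Equiv.sigmaCongrRight fun k => (Equiv.subtypeEquivRight fun _ => Fin.ext_iff).trans <|
    (Equiv.subtypeSubtypeEquivSubtypeInter IsOSP (·.length = k.1)).trans (ospEquivSurjective k)

@[simp] lemma coe_ospEquivSigma_symm
    (q : Σ k : Fin (n + 1), {f : Fin n → Fin k // Surjective f}) :
    ((ospEquivSigma n).symm q).1 = blocks q.2.1 :=
  rfl

end OrderedSetPartitions

variable {n : ℕ}

def boxedThresholdOrderEquiv (n : ℕ) :
    {p : List (Finset (Fin n)) × List Bool × ℕ // IsBoxedThresholdOrder p} ≃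
      Σ L : {L : List (Finset (Fin n)) // IsOSP L}, Decorations L.1.length L.1.headI.card where
  toFun p := ⟨⟨p.1.1, ((isBoxedThresholdOrder_iff _ _ _).1 p.2).1⟩,
    ⟨p.1.2, ((isBoxedThresholdOrder_iff _ _ _).1 p.2).2⟩⟩
  invFun q := ⟨(q.1.1, q.2.1), (isBoxedThresholdOrder_iff _ _ _).2 ⟨q.1.2, q.2.2⟩⟩
  left_inv _ := rfl
  right_inv _ := rfl

lemma card_boxedThresholdOrders_eq_sum (n : ℕ) :
    Nat.card {p : List (Finset (Fin n)) × List Bool × ℕ // IsBoxedThresholdOrder p} =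
      ∑ k : Fin (n + 1), ∑ f : {f : Fin n → Fin k // Surjective f},
        Nat.card (Decorations k (blocks f.1).headI.card) := by
  rw [Nat.card_congr
      ((boxedThresholdOrderEquiv n).trans (Equiv.sigmaCongrLeft' (ospEquivSigma n))),
    Nat.card_sigma, Fintype.sum_sigma]
  simp only [coe_ospEquivSigma_symm, length_blocks]

open Classical in
lemma card_decorations_blocks (hn : 2 ≤ n) {k : ℕ} {f : Fin n → Fin (k + 1)}
    (hf : Surjective f) :
    Nat.card (Decorations (k + 1) (blocks f).headI.card) =
      if ∃! x, f x = 0 then 4 else 4 * (k + 1) := by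
  rw [headI_blocks]
  split_ifs with h
  · obtain ⟨j, rfl⟩ : ∃ j, k = j + 1 := by
      refine Nat.exists_eq_add_one.2 (Nat.pos_of_ne_zero fun hk => ?_)
      subst hk
      have := h.unique (y₁ := ⟨0, by omega⟩) (y₂ := ⟨1, by omega⟩)
        (Fin.fin_one_eq_zero _) (Fin.fin_one_eq_zero _)
      simp at this
    rw [(Fintype.existsUnique_iff_card_one _).1 h, card_decorations_one]
  · have hpos : 0 < (univ.filter (f · = 0)).card := by
      obtain ⟨x, hx⟩ := hf 0
      exact card_pos.2 ⟨x, by simpa using hx⟩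
    have hne : (univ.filter (f · = 0)).card ≠ 1 :=
      fun h1 => h ((Fintype.existsUnique_iff_card_one _).2 h1)
    exact card_decorations_of_one_lt (by omega) k

lemma sum_card_decorations_blocks (hn : 2 ≤ n) (k : ℕ) :
    (∑ f : {f : Fin n → Fin (k + 1) // Surjective f},
        Nat.card (Decorations (k + 1) (blocks f.1).headI.card) : ℤ) =
      4 * (k + 1) * ((k + 1).factorial * stirling n (k + 1)) -
        4 * k * (n * (k.factorial * stirling (n - 1) k)) := by
  classical
  obtain ⟨n, rfl⟩ : ∃ m, n = m + 1 := ⟨n - 1, by omega⟩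
  have hweight (f : {f : Fin (n + 1) → Fin (k + 1) // Surjective f}) :
      (Nat.card (Decorations (k + 1) (blocks f.1).headI.card) : ℤ) =
        4 * (k + 1) - 4 * k * if ∃! x, f.1 x = 0 then 1 else 0 := by
    rw [card_decorations_blocks hn f.2]
    split_ifs <;> push_cast <;> ring
  have hsingleton : (univ.filter fun f : {f : Fin (n + 1) → Fin (k + 1) // Surjective f} =>
      ∃! x, f.1 x = 0).card = (n + 1) * (k.factorial * stirling n k) := by
    rw [← Fintype.card_subtype, ← Nat.card_eq_fintype_card,
      Nat.card_congr (Equiv.subtypeSubtypeEquivSubtypeInter (fun f => Surjective f)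
        fun f => ∃! x, f x = 0),
      card_surjective_existsUnique_preimage]
  push_cast
  rw [sum_congr rfl fun f _ => hweight f, sum_sub_distrib, sum_const, ← mul_sum, sum_boole,
    hsingleton, card_univ, ← Nat.card_eq_fintype_card, card_surjective_fin]
  simp only [Int.nsmul_eq_mul, Nat.cast_mul, Nat.cast_add, Nat.cast_one]
  ring

lemma card_boxedThresholdOrders (hn : 2 ≤ n) :
    (Nat.card {p : List (Finset (Fin n)) × List Bool × ℕ // IsBoxedThresholdOrder p} : ℤ) =
      ∑ k ∈ range n, (4 * (k + 1) * ((k + 1).factorial * stirling n (k + 1)) -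
        4 * k * (n * (k.factorial * stirling (n - 1) k)) : ℤ) := by
  have : IsEmpty {f : Fin n → Fin 0 // Surjective f} :=
    ⟨fun f => (f.1 ⟨0, by omega⟩).elim0⟩
  rw [card_boxedThresholdOrders_eq_sum, Fin.sum_univ_eq_sum_range (fun k =>
      ∑ f : {f : Fin n → Fin k // Surjective f},
        Nat.card (Decorations k (blocks f.1).headI.card)),
    sum_range_succ']
  push_cast
  simp only [univ_eq_empty, sum_empty, add_zero]
  exact sum_congr rfl fun k _ => sum_card_decorations_blocks hn k

end BoxedThreshold

theorem card_colored_threshold_orders (n : ℕ) (hn : 2 ≤ n) :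
    (Nat.card {p : List (Finset (Fin n)) × List Bool × ℕ //
        IsBoxedThresholdOrder p} : ℤ) =
      4 * (fubini n : ℤ) +
        ∑ k ∈ Finset.Icc 1 n,
          4 * ((k.factorial : ℤ) - (k - 1).factorial) *
            ((k : ℤ) * stirling n k - (n : ℤ) * stirling (n - 1) (k - 1)) := by
  have hfubini : fubini n = ∑ k ∈ range n, (k + 1).factorial * stirling n (k + 1) := by
    obtain ⟨m, rfl⟩ : ∃ m, n = m + 1 := ⟨n - 1, by omega⟩
    simp [fubini, sum_range_succ' _ (m + 1), stirling]
  rw [BoxedThreshold.card_boxedThresholdOrders hn, hfubini, ← Ico_add_one_right_eq_Icc,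
    sum_Ico_eq_sum_range, Nat.add_sub_cancel]
  push_cast
  rw [mul_sum, ← sum_add_distrib]
  refine sum_congr rfl fun k _ => ?_
  rw [add_comm 1 k, Nat.add_sub_cancel, Nat.factorial_succ]
  push_cast
  ring
end

section
/- For n ≥ 1 and 0 ≤ j ≤ n, the absolute value of the coefficient of t^j in the polynomial ∏_{i=1}^{n}(t − (2i−1)) equals the number of signed permutations of [n] with exactly j odd cycles. -/
/-!
Write a signed permutation `π` of `[n+1]` as `signedSwap x * liftPerm π'`, where
`x = π (+(n+1))`, `signedSwap x` is the signed involution exchanging `±(n+1)` with `±x.1`, and `π'`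
is a signed permutation of `[n]`. On `±1, …, ±n` the permutation `π'` is the first-return map of
`π`, so `π` and `π'` have the same cycles there; hence `π` has the odd cycles of `π'`, plus the two
fixed points `±(n+1)` when `x = +(n+1)`. So the number `c(n, j)` of signed permutations of `[n]`
with `j` odd cycles satisfies `c(n+1, j) = c(n, j-1) + (2n+1) c(n, j)`, which is also the
recurrence, up to the sign `(-1)^(n+j)`, of the coefficients of `∏ (t - (2i-1))`.
-/

open Finset

/-- Negation on `{±1, …, ±n}`, encoded as `Fin n × Bool`. -/
def negate {n : ℕ} (x : Fin n × Bool) : Fin n × Bool := (x.1, !x.2)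

/-- The number of odd cycles of a signed permutation `π`: orbits of `π` on
`{±1, …, ±n}` that are disjoint from their negation come in pairs under
negation, and we count these pairs. -/
noncomputable def oddCycleCount {n : ℕ} (π : Equiv.Perm (Fin n × Bool)) : ℕ :=
  Nat.card {O : Set (Fin n × Bool) //
      (∃ x, O = {y | π.SameCycle x y}) ∧ ∀ y ∈ O, negate y ∉ O} / 2

namespace Equiv.Perm

variable {α β : Type*}

def cycleSet (σ : Perm α) (x : α) : Set α := {y | σ.SameCycle x y}

@[simp] lemma mem_cycleSet {σ : Perm α} {x y : α} : y ∈ σ.cycleSet x ↔ σ.SameCycle x y :=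
  Iff.rfl

lemma cycleSet_eq_cycleSet_iff {σ : Perm α} {x y : α} :
    σ.cycleSet x = σ.cycleSet y ↔ σ.SameCycle x y := by
  refine ⟨fun h => ?_, fun h => Set.ext fun w => ⟨h.symm.trans, h.trans⟩⟩
  have : y ∈ σ.cycleSet y := SameCycle.refl σ y
  rwa [← h] at this

lemma cycleSet_of_apply_eq_self {σ : Perm α} {x : α} (hx : σ x = x) : σ.cycleSet x = {x} := by
  ext y
  refine ⟨fun ⟨i, hi⟩ => ?_, fun hy => hy ▸ SameCycle.refl σ x⟩
  rw [← hi, zpow_apply_eq_self_of_apply_eq_self hx, Set.mem_singleton_iff]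

/-- The hypotheses say that `τ` is the first-return map of `σ` on `S`, every excursion of `σ` out
of `S` lasting a single step. -/
theorem sameCycle_iff_of_firstReturn [Finite α] {σ τ : Perm α} {S : Set α}
    (hτ : ∀ y ∈ S, τ y ∈ S) (hσ : ∀ y ∈ S, σ y = τ y ∨ σ y ∉ S ∧ σ (σ y) = τ y)
    {y w : α} (hy : y ∈ S) (hw : w ∈ S) : σ.SameCycle y w ↔ τ.SameCycle y w := by
  constructor
  · intro h
    obtain ⟨m, rfl⟩ := h.exists_nat_pow_eq
    -- the points `σ` reaches from `y`: `τ`-iterates of `y`, and their one-step excursions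
    let T : Set α := {u | ∃ c ∈ S, τ.SameCycle y c ∧ (u = c ∨ u = σ c ∧ u ∉ S)}
    have hT : ∀ k : ℕ, (σ ^ k) y ∈ T := by
      intro k
      induction k with
      | zero => exact ⟨y, hy, SameCycle.refl τ y, Or.inl rfl⟩
      | succ k ih =>
        obtain ⟨c, hc, hyc, hu⟩ := ih
        rw [pow_succ', mul_apply]
        rcases hu with hu | ⟨hu, huS⟩ <;> rw [hu]
        · rcases hσ c hc with h | ⟨h, -⟩
          · exact ⟨τ c, hτ c hc, sameCycle_apply_right.2 hyc, Or.inl h⟩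
          · exact ⟨c, hc, hyc, Or.inr ⟨rfl, h⟩⟩
        · rcases hσ c hc with h | ⟨-, h⟩
          · exact absurd (h ▸ hτ c hc) (hu ▸ huS)
          · exact ⟨τ c, hτ c hc, sameCycle_apply_right.2 hyc, Or.inl h⟩
    obtain ⟨c, -, hyc, hu | ⟨-, hu⟩⟩ := hT m
    · exact hu ▸ hyc
    · exact absurd hw hu
  · intro h
    have hS : ∀ k : ℕ, (τ ^ k) y ∈ S := fun k => by
      induction k with
      | zero => exact hy
      | succ k ih => rw [pow_succ', mul_apply]; exact hτ _ ih
    have hστ : ∀ k : ℕ, σ.SameCycle y ((τ ^ k) y) := fun k => by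
      induction k with
      | zero => exact SameCycle.refl σ y
      | succ k ih =>
        rw [pow_succ', mul_apply]
        rcases hσ _ (hS k) with h | ⟨-, h⟩ <;> rw [← h]
        · exact sameCycle_apply_right.2 ih
        · exact sameCycle_apply_right.2 (sameCycle_apply_right.2 ih)
    obtain ⟨k, rfl⟩ := h.exists_nat_pow_eq
    exact hστ k

lemma ncard_image_cycleSet_comp {σ : Perm α} {τ : Perm β} {f : β → α}
    (hf : ∀ a b, σ.SameCycle (f a) (f b) ↔ τ.SameCycle a b) (Q : Set β) :
    (σ.cycleSet '' (f '' Q)).ncard = (τ.cycleSet '' Q).ncard := by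
  have hpre : ∀ a, f ⁻¹' σ.cycleSet (f a) = τ.cycleSet a := fun a => Set.ext (hf a)
  have hinj : Set.InjOn (f ⁻¹' ·) (σ.cycleSet '' (f '' Q)) := by
    rintro _ ⟨_, ⟨a, -, rfl⟩, rfl⟩ _ ⟨_, ⟨b, -, rfl⟩, rfl⟩ hab
    simp only [hpre, cycleSet_eq_cycleSet_iff] at hab ⊢
    exact (hf a b).2 hab
  rw [← hinj.ncard_image, Set.image_image, Set.image_image]
  simp only [hpre]

end Equiv.Perm

namespace SignedPerm

open Equiv Perm Polynomial

variable {n : ℕ}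

@[simp] lemma negate_negate (x : Fin n × Bool) : negate (negate x) = x := by simp [negate]

lemma negate_involutive : Function.Involutive (negate (n := n)) := negate_negate

@[simp] lemma negate_inj {x y : Fin n × Bool} : negate x = negate y ↔ x = y :=
  negate_involutive.injective.eq_iff

@[simp] lemma negate_ne_self (x : Fin n × Bool) : negate x ≠ x := by
  simp [negate, Prod.ext_iff]

def negPerm (n : ℕ) : Perm (Fin n × Bool) := negate_involutive.toPerm

def signedPerms (n : ℕ) : Subgroup (Perm (Fin n × Bool)) := Subgroup.centralizer {negPerm n}

lemma mem_signedPerms {π : Perm (Fin n × Bool)} :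
    π ∈ signedPerms n ↔ ∀ x, π (negate x) = negate (π x) := by
  rw [signedPerms, Subgroup.mem_centralizer_singleton_iff, Perm.ext_iff]
  rfl

lemma sameCycle_negate {π : Perm (Fin n × Bool)} (hπ : π ∈ signedPerms n)
    {a b : Fin n × Bool} :
    π.SameCycle (negate a) (negate b) ↔ π.SameCycle a b :=
  exists_congr fun i => by rw [mem_signedPerms.1 (zpow_mem hπ i), negate_inj]

def oddCycles (π : Perm (Fin n × Bool)) : Set (Set (Fin n × Bool)) :=
  {O | (∃ x, O = π.cycleSet x) ∧ ∀ y ∈ O, negate y ∉ O}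

lemma oddCycleCount_eq_ncard (π : Perm (Fin n × Bool)) :
    oddCycleCount π = (oddCycles π).ncard / 2 :=
  rfl

def oddPoints (π : Perm (Fin n × Bool)) : Set (Fin n × Bool) :=
  {y | ¬π.SameCycle y (negate y)}

lemma mem_oddPoints_iff_of_sameCycle {π : Perm (Fin n × Bool)} (hπ : π ∈ signedPerms n)
    {y w : Fin n × Bool} (h : π.SameCycle y w) : y ∈ oddPoints π ↔ w ∈ oddPoints π := by
  have hneg : π.SameCycle (negate y) (negate w) := (sameCycle_negate hπ).2 h
  exact not_congr
    ⟨fun h' => h.symm.trans (h'.trans hneg), fun h' => h.trans (h'.trans hneg.symm)⟩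

lemma mem_oddPoints_of_apply_eq_self {π : Perm (Fin n × Bool)} {y : Fin n × Bool}
    (hy : π y = y) : y ∈ oddPoints π := by
  intro h
  rw [← mem_cycleSet, cycleSet_of_apply_eq_self hy, Set.mem_singleton_iff] at h
  exact negate_ne_self _ h

lemma oddCycles_eq_image {π : Perm (Fin n × Bool)} (hπ : π ∈ signedPerms n) :
    oddCycles π = π.cycleSet '' oddPoints π := by
  ext O
  constructor
  · rintro ⟨⟨x, rfl⟩, hO⟩
    exact ⟨x, hO x (SameCycle.refl π x), rfl⟩
  · rintro ⟨x, hx, rfl⟩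
    refine ⟨⟨x, rfl⟩, fun y hy hny => ?_⟩
    exact (mem_oddPoints_iff_of_sameCycle hπ hy).1 hx (hy.symm.trans hny)

/-- The letter `+(n+1)`. -/
def posLast (n : ℕ) : Fin (n + 1) × Bool := (Fin.last n, false)

def castSucc (a : Fin n × Bool) : Fin (n + 1) × Bool := (a.1.castSucc, a.2)

lemma negate_castSucc (a : Fin n × Bool) : negate (castSucc a) = castSucc (negate a) := rfl

lemma castSucc_ne_last (a : Fin n × Bool) : (castSucc a).1 ≠ Fin.last n := Fin.castSucc_ne_last _

lemma exists_castSucc_eq {y : Fin (n + 1) × Bool} (hy : y.1 ≠ Fin.last n) :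
    ∃ a, castSucc a = y :=
  ⟨(y.1.castPred hy, y.2), rfl⟩

lemma eq_posLast_or_eq_negate {y : Fin (n + 1) × Bool} (hy : y.1 = Fin.last n) :
    y = posLast n ∨ y = negate (posLast n) := by
  obtain ⟨i, _ | _⟩ := y <;> simp_all [posLast, negate]

def castSuccEquiv (n : ℕ) : Fin n × Bool ≃ {y : Fin (n + 1) × Bool // y.1 ≠ Fin.last n} where
  toFun a := ⟨castSucc a, castSucc_ne_last a⟩
  invFun y := (y.1.1.castPred y.2, y.1.2)
  left_inv _ := rfl
  right_inv _ := rfl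

def liftPerm (π' : Perm (Fin n × Bool)) : Perm (Fin (n + 1) × Bool) :=
  π'.extendDomain (castSuccEquiv n)

lemma liftPerm_apply_castSucc (π' : Perm (Fin n × Bool)) (a : Fin n × Bool) :
    liftPerm π' (castSucc a) = castSucc (π' a) :=
  extendDomain_apply_image π' (castSuccEquiv n) a

lemma liftPerm_apply_of_eq_last (π' : Perm (Fin n × Bool)) {y : Fin (n + 1) × Bool}
    (hy : y.1 = Fin.last n) : liftPerm π' y = y :=
  extendDomain_apply_not_subtype π' (castSuccEquiv n) (not_not.2 hy)

lemma liftPerm_apply_ne_last (π' : Perm (Fin n × Bool)) {y : Fin (n + 1) × Bool}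
    (hy : y.1 ≠ Fin.last n) : (liftPerm π' y).1 ≠ Fin.last n := by
  obtain ⟨a, rfl⟩ := exists_castSucc_eq hy
  rw [liftPerm_apply_castSucc]
  exact castSucc_ne_last _

lemma sameCycle_liftPerm {π' : Perm (Fin n × Bool)} {a b : Fin n × Bool} :
    (liftPerm π').SameCycle (castSucc a) (castSucc b) ↔ π'.SameCycle a b :=
  sameCycle_extendDomain

lemma liftPerm_injective : Function.Injective (liftPerm (n := n)) :=
  extendDomainHom_injective (castSuccEquiv n)

lemma liftPerm_mem_signedPerms_iff {π' : Perm (Fin n × Bool)} :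
    liftPerm π' ∈ signedPerms (n + 1) ↔ π' ∈ signedPerms n := by
  simp only [mem_signedPerms]
  constructor
  · intro h a
    have := h (castSucc a)
    rw [negate_castSucc, liftPerm_apply_castSucc, liftPerm_apply_castSucc, negate_castSucc] at this
    exact (castSuccEquiv n).injective (Subtype.ext this)
  · intro h y
    by_cases hy : y.1 = Fin.last n
    · rw [liftPerm_apply_of_eq_last π' hy, liftPerm_apply_of_eq_last π' (y := negate y) hy]
    · obtain ⟨a, rfl⟩ := exists_castSucc_eq hy
      rw [negate_castSucc, liftPerm_apply_castSucc, liftPerm_apply_castSucc, h, negate_castSucc]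

lemma exists_liftPerm_eq {ρ : Perm (Fin (n + 1) × Bool)}
    (hρ : ∀ y, y.1 = Fin.last n → ρ y = y) : ∃ π', liftPerm π' = ρ := by
  have hS : ∀ y, (ρ y).1 ≠ Fin.last n ↔ y.1 ≠ Fin.last n := by
    refine fun y => not_congr ⟨fun h => ?_, fun h => by rwa [hρ y h]⟩
    rwa [ρ.injective (hρ _ h)] at h
  refine ⟨(castSuccEquiv n).symm.permCongr (ρ.subtypePerm hS), Equiv.ext fun y => ?_⟩
  by_cases hy : y.1 = Fin.last n
  · rw [liftPerm_apply_of_eq_last _ hy, hρ y hy]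
  · obtain ⟨a, rfl⟩ := exists_castSucc_eq hy
    rw [liftPerm_apply_castSucc]
    rfl

/-- The signed permutation exchanging the letters `±(n+1)` with `±x.1`, so that `+(n+1) ↦ x`. -/
def signedSwap (x : Fin (n + 1) × Bool) : Perm (Fin (n + 1) × Bool) :=
  Function.Involutive.toPerm
    (fun y => if y.1 = Fin.last n then (x.1, y.2 ^^ x.2)
      else if y.1 = x.1 then (Fin.last n, y.2 ^^ x.2) else y)
    (fun ⟨i, b⟩ => by by_cases h₁ : i = Fin.last n <;> by_cases h₂ : i = x.1 <;> simp_all)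

lemma signedSwap_apply (x y : Fin (n + 1) × Bool) :
    signedSwap x y = if y.1 = Fin.last n then (x.1, y.2 ^^ x.2)
      else if y.1 = x.1 then (Fin.last n, y.2 ^^ x.2) else y := rfl

lemma signedSwap_mul_self (x : Fin (n + 1) × Bool) : signedSwap x * signedSwap x = 1 :=
  Equiv.ext (Function.Involutive.toPerm_involutive _)

lemma signedSwap_apply_posLast (x : Fin (n + 1) × Bool) : signedSwap x (posLast n) = x := by
  simp [signedSwap_apply, posLast]

lemma signedSwap_apply_self (x : Fin (n + 1) × Bool) : signedSwap x x = posLast n := by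
  by_cases hx : x.1 = Fin.last n <;> simp [signedSwap_apply, posLast, hx]

lemma signedSwap_mem_signedPerms (x : Fin (n + 1) × Bool) :
    signedSwap x ∈ signedPerms (n + 1) :=
  mem_signedPerms.2 fun y => by simp only [signedSwap_apply, negate]; split_ifs <;> simp

lemma signedSwap_apply_of_ne_last (x : Fin (n + 1) × Bool) {y : Fin (n + 1) × Bool}
    (hy : y.1 ≠ Fin.last n) : signedSwap x y = y ∨ (signedSwap x y).1 = Fin.last n := by
  rw [signedSwap_apply, if_neg hy]
  split_ifs <;> simp

def insertLast (x : Fin (n + 1) × Bool) (π' : Perm (Fin n × Bool)) :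
    Perm (Fin (n + 1) × Bool) :=
  signedSwap x * liftPerm π'

lemma insertLast_apply_posLast (x : Fin (n + 1) × Bool) (π' : Perm (Fin n × Bool)) :
    insertLast x π' (posLast n) = x := by
  rw [insertLast, mul_apply, liftPerm_apply_of_eq_last _ rfl, signedSwap_apply_posLast]

/-- `liftPerm π'` is the first-return map of `insertLast x π'` on `±1, …, ±n`. -/
lemma sameCycle_insertLast (x : Fin (n + 1) × Bool) (π' : Perm (Fin n × Bool))
    (a b : Fin n × Bool) :
    (insertLast x π').SameCycle (castSucc a) (castSucc b) ↔ π'.SameCycle a b := by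
  refine (sameCycle_iff_of_firstReturn (S := {y : Fin (n + 1) × Bool | y.1 ≠ Fin.last n})
    (fun _ => liftPerm_apply_ne_last π') (fun y hy => ?_) (castSucc_ne_last a)
      (castSucc_ne_last b)).trans sameCycle_liftPerm
  have hu := liftPerm_apply_ne_last π' hy
  rw [insertLast, mul_apply]
  rcases signedSwap_apply_of_ne_last x hu with h | h
  · exact Or.inl h
  · refine Or.inr ⟨not_not.2 h, ?_⟩
    rw [mul_apply, liftPerm_apply_of_eq_last π' h, ← mul_apply, signedSwap_mul_self, one_apply]

variable {σ : Perm (Fin (n + 1) × Bool)} {π' : Perm (Fin n × Bool)}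

lemma apply_eq_self_iff_of_eq_last (hσ : σ ∈ signedPerms (n + 1)) {y : Fin (n + 1) × Bool}
    (hy : y.1 = Fin.last n) : σ y = y ↔ σ (posLast n) = posLast n := by
  rcases eq_posLast_or_eq_negate hy with rfl | rfl
  · rfl
  · rw [mem_signedPerms.1 hσ, negate_inj]

lemma eq_negate_of_eq_last {y w : Fin (n + 1) × Bool} (hy : y.1 = Fin.last n)
    (hw : w.1 = Fin.last n) (hne : w ≠ y) : w = negate y := by
  obtain ⟨i, b⟩ := y
  obtain ⟨j, c⟩ := w
  simp only at hy hw
  subst hy hw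
  cases b <;> cases c <;> simp_all [negate]

lemma castSucc_mem_oddPoints_iff
    (h : ∀ a b, σ.SameCycle (castSucc a) (castSucc b) ↔ π'.SameCycle a b) (a : Fin n × Bool) :
    castSucc a ∈ oddPoints σ ↔ a ∈ oddPoints π' :=
  not_congr (by rw [negate_castSucc]; exact h a (negate a))

section
variable (hσ : σ ∈ signedPerms (n + 1))
  (h : ∀ a b, σ.SameCycle (castSucc a) (castSucc b) ↔ π'.SameCycle a b)
include hσ h

lemma image_oddPoints_of_apply_ne (hz : σ (posLast n) ≠ posLast n) :
    σ.cycleSet '' oddPoints σ = σ.cycleSet '' (castSucc '' oddPoints π') := by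
  refine subset_antisymm ?_ (Set.image_mono ?_)
  · rintro _ ⟨y, hy, rfl⟩
    by_cases hyl : y.1 = Fin.last n
    · have hne : σ y ≠ y := mt (apply_eq_self_iff_of_eq_last hσ hyl).1 hz
      have hsc : σ.SameCycle y (σ y) := sameCycle_apply_right.2 (SameCycle.refl σ y)
      have hσyl : (σ y).1 ≠ Fin.last n :=
        fun hσy => hy (eq_negate_of_eq_last hyl hσy hne ▸ hsc)
      obtain ⟨a, ha⟩ := exists_castSucc_eq hσyl
      refine ⟨castSucc a, ⟨a, ?_, rfl⟩, cycleSet_eq_cycleSet_iff.2 (ha ▸ hsc.symm)⟩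
      rwa [← castSucc_mem_oddPoints_iff h, ha, ← mem_oddPoints_iff_of_sameCycle hσ hsc]
    · obtain ⟨a, rfl⟩ := exists_castSucc_eq hyl
      exact ⟨castSucc a, ⟨a, (castSucc_mem_oddPoints_iff h a).1 hy, rfl⟩, rfl⟩
  · rintro _ ⟨a, ha, rfl⟩
    exact (castSucc_mem_oddPoints_iff h a).2 ha

lemma image_oddPoints_of_apply_eq (hz : σ (posLast n) = posLast n) :
    σ.cycleSet '' oddPoints σ =
      insert {posLast n}
        (insert {negate (posLast n)} (σ.cycleSet '' (castSucc '' oddPoints π'))) := by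
  have hfix : ∀ y : Fin (n + 1) × Bool, y.1 = Fin.last n → σ y = y :=
    fun y hy => (apply_eq_self_iff_of_eq_last hσ hy).2 hz
  ext O
  simp only [Set.mem_image, Set.mem_insert_iff]
  constructor
  · rintro ⟨y, hy, rfl⟩
    by_cases hyl : y.1 = Fin.last n
    · rw [cycleSet_of_apply_eq_self (hfix y hyl)]
      rcases eq_posLast_or_eq_negate hyl with rfl | rfl <;> simp
    · obtain ⟨a, rfl⟩ := exists_castSucc_eq hyl
      exact Or.inr (Or.inr ⟨castSucc a, ⟨a, (castSucc_mem_oddPoints_iff h a).1 hy, rfl⟩, rfl⟩)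
  · rintro (rfl | rfl | ⟨_, ⟨a, ha, rfl⟩, rfl⟩)
    · exact ⟨_, mem_oddPoints_of_apply_eq_self hz, cycleSet_of_apply_eq_self hz⟩
    · have hz' := hfix (negate (posLast n)) rfl
      exact ⟨_, mem_oddPoints_of_apply_eq_self hz', cycleSet_of_apply_eq_self hz'⟩
    · exact ⟨castSucc a, (castSucc_mem_oddPoints_iff h a).2 ha, rfl⟩

lemma ncard_oddCycles (hπ' : π' ∈ signedPerms n) :
    (oddCycles σ).ncard =
      (oddCycles π').ncard + if σ (posLast n) = posLast n then 2 else 0 := by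
  have hsingleton : ∀ w : Fin (n + 1) × Bool, w.1 = Fin.last n →
      {w} ∉ σ.cycleSet '' (castSucc '' oddPoints π') := by
    rintro w hw ⟨_, ⟨a, -, rfl⟩, hO⟩
    have : castSucc a ∈ ({w} : Set _) := hO ▸ SameCycle.refl σ _
    exact castSucc_ne_last a (Set.mem_singleton_iff.1 this ▸ hw)
  rw [oddCycles_eq_image hσ, oddCycles_eq_image hπ', ← ncard_image_cycleSet_comp h]
  split_ifs with hz
  · rw [image_oddPoints_of_apply_eq hσ h hz, Set.ncard_insert_of_notMem,
      Set.ncard_insert_of_notMem]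
    · exact hsingleton _ rfl
    · rintro (hO | hO)
      · exact negate_ne_self _ (Set.singleton_eq_singleton_iff.1 hO).symm
      · exact hsingleton _ rfl hO
  · rw [image_oddPoints_of_apply_ne hσ h hz, add_zero]

end

lemma insertLast_mem_signedPerms (x : Fin (n + 1) × Bool) (hπ' : π' ∈ signedPerms n) :
    insertLast x π' ∈ signedPerms (n + 1) :=
  mul_mem (signedSwap_mem_signedPerms x) (liftPerm_mem_signedPerms_iff.2 hπ')

lemma oddCycleCount_insertLast (x : Fin (n + 1) × Bool) (hπ' : π' ∈ signedPerms n) :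
    oddCycleCount (insertLast x π') = oddCycleCount π' + if x = posLast n then 1 else 0 := by
  rw [oddCycleCount_eq_ncard, oddCycleCount_eq_ncard,
    ncard_oddCycles (insertLast_mem_signedPerms x hπ') (sameCycle_insertLast x π') hπ',
    insertLast_apply_posLast]
  split_ifs <;> omega

/-- Type-B analogue of `Equiv.Perm.decomposeFin`. -/
noncomputable def insertLastEquiv (n : ℕ) :
    (Fin (n + 1) × Bool) × signedPerms n ≃ signedPerms (n + 1) :=
  Equiv.ofBijective (fun q => ⟨insertLast q.1 q.2, insertLast_mem_signedPerms q.1 q.2.2⟩) <| by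
    refine ⟨fun ⟨x₁, π₁⟩ ⟨x₂, π₂⟩ heq => ?_, fun ⟨π, hπ⟩ => ?_⟩
    · have heq' : insertLast x₁ π₁ = insertLast x₂ π₂ := congrArg Subtype.val heq
      obtain rfl : x₁ = x₂ := by
        rw [← insertLast_apply_posLast x₁ π₁, heq', insertLast_apply_posLast]
      exact Prod.ext rfl (Subtype.ext (liftPerm_injective (mul_left_cancel heq')))
    · obtain ⟨x, hx⟩ : ∃ x, π (posLast n) = x := ⟨_, rfl⟩
      have hρ : signedSwap x * π ∈ signedPerms (n + 1) :=
        mul_mem (signedSwap_mem_signedPerms x) hπ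
      have hz : (signedSwap x * π) (posLast n) = posLast n := by
        rw [mul_apply, hx, signedSwap_apply_self]
      obtain ⟨π', hπ'⟩ :=
        exists_liftPerm_eq fun y hy => (apply_eq_self_iff_of_eq_last hρ hy).2 hz
      refine ⟨(x, ⟨π', liftPerm_mem_signedPerms_iff.1 (hπ' ▸ hρ)⟩), Subtype.ext ?_⟩
      change signedSwap x * liftPerm π' = π
      rw [hπ', ← mul_assoc, signedSwap_mul_self, one_mul]

lemma oddCycleCount_insertLastEquiv (q : (Fin (n + 1) × Bool) × signedPerms n) :
    oddCycleCount (insertLastEquiv n q : Perm (Fin (n + 1) × Bool)) =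
      oddCycleCount (q.2 : Perm (Fin n × Bool)) + if q.1 = posLast n then 1 else 0 :=
  oddCycleCount_insertLast q.1 q.2.2

noncomputable def signedPermCount (n j : ℕ) : ℕ :=
  Nat.card {π : signedPerms n // oddCycleCount (π : Perm (Fin n × Bool)) = j}

lemma signedPermCount_zero (j : ℕ) : signedPermCount 0 j = if j = 0 then 1 else 0 := by
  have hcount : ∀ π : Perm (Fin 0 × Bool), oddCycleCount π = 0 := fun π => by
    simp [oddCycleCount_eq_ncard, oddCycles]
  simp only [signedPermCount, hcount]
  split_ifs with hj
  · subst hj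
    exact Nat.card_eq_one_iff_unique.2 ⟨inferInstance, ⟨⟨1, one_mem _⟩, rfl⟩⟩
  · have : IsEmpty {π : signedPerms 0 // 0 = j} := ⟨fun π => hj π.2.symm⟩
    exact Nat.card_of_isEmpty

lemma signedPermCount_succ (n j : ℕ) :
    signedPermCount (n + 1) j =
      Nat.card {π : signedPerms n // oddCycleCount (π : Perm (Fin n × Bool)) + 1 = j} +
        (2 * n + 1) * signedPermCount n j := by
  have e : {π : signedPerms (n + 1) // oddCycleCount (π : Perm (Fin (n + 1) × Bool)) = j} ≃
      Σ x : Fin (n + 1) × Bool, {π : signedPerms n //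
        oddCycleCount (π : Perm (Fin n × Bool)) + (if x = posLast n then 1 else 0) = j} :=
    ((insertLastEquiv n).subtypeEquiv fun q => by
      rw [oddCycleCount_insertLastEquiv]).symm.trans (subtypeProdEquivSigmaSubtype _)
  rw [signedPermCount, Nat.card_congr e, Nat.card_sigma,
    Fintype.sum_eq_add_sum_compl (posLast n), if_pos rfl]
  congr 1
  have hterm : ∀ x ∈ ({posLast n}ᶜ : Finset (Fin (n + 1) × Bool)),
      Nat.card {π : signedPerms n //
        oddCycleCount (π : Perm (Fin n × Bool)) + (if x = posLast n then 1 else 0) = j} =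
        signedPermCount n j := fun x hx => by
    simp only [if_neg (Finset.mem_compl.1 hx ∘ Finset.mem_singleton.2), add_zero,
      signedPermCount]
  rw [Finset.sum_congr rfl hterm, Finset.sum_const, Finset.card_compl, smul_eq_mul,
    Finset.card_singleton, Fintype.card_prod, Fintype.card_fin, Fintype.card_bool]
  congr 1
  omega

lemma signedPermCount_succ_zero (n : ℕ) :
    signedPermCount (n + 1) 0 = (2 * n + 1) * signedPermCount n 0 := by
  have : IsEmpty {π : signedPerms n // oddCycleCount (π : Perm (Fin n × Bool)) + 1 = 0} :=
    ⟨fun π => Nat.succ_ne_zero _ π.2⟩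
  rw [signedPermCount_succ, Nat.card_of_isEmpty, zero_add]

lemma signedPermCount_succ_succ (n j : ℕ) :
    signedPermCount (n + 1) (j + 1) =
      signedPermCount n j + (2 * n + 1) * signedPermCount n (j + 1) := by
  rw [signedPermCount_succ]
  simp only [Nat.add_right_cancel_iff]
  rfl

lemma coeff_prod_X_sub_odd (n j : ℕ) :
    (∏ i ∈ Finset.Icc 1 n, (X - C (2 * (i : ℤ) - 1))).coeff j =
      (-1 : ℤ) ^ (n + j) * signedPermCount n j := by
  induction n generalizing j with
  | zero =>
    rw [Finset.Icc_eq_empty_of_lt Nat.zero_lt_one, Finset.prod_empty, coeff_one,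
      signedPermCount_zero]
    split_ifs with hj <;> simp [hj]
  | succ n ih =>
    rw [Finset.prod_Icc_succ_top (Nat.le_add_left 1 n)]
    cases j with
    | zero =>
      rw [mul_coeff_zero, ih, signedPermCount_succ_zero]
      simp only [coeff_sub, coeff_X_zero, coeff_C_zero]
      push_cast
      ring
    | succ j =>
      rw [coeff_mul_X_sub_C, ih, ih, signedPermCount_succ_succ]
      push_cast
      ring

end SignedPerm

theorem abs_coeff_eq_card_signed_perms_odd_cycles_general (n j : ℕ) :
    ((∏ i ∈ Finset.Icc 1 n,
        (Polynomial.X - Polynomial.C (2 * (i : ℤ) - 1))).coeff j).natAbs =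
      Nat.card {π : Equiv.Perm (Fin n × Bool) //
        (∀ x, π (negate x) = negate (π x)) ∧ oddCycleCount π = j} := by
  rw [SignedPerm.coeff_prod_X_sub_odd, Int.natAbs_mul, Int.natAbs_pow, Int.natAbs_neg,
    Int.natAbs_one, one_pow, one_mul, Int.natAbs_natCast, SignedPerm.signedPermCount]
  exact Nat.card_congr ((Equiv.subtypeSubtypeEquivSubtypeInter (· ∈ SignedPerm.signedPerms n)
    fun π => oddCycleCount π = j).trans
    (Equiv.subtypeEquivRight fun π => and_congr_left' SignedPerm.mem_signedPerms))

theorem abs_coeff_eq_card_signed_perms_odd_cycles (n j : ℕ) (hn : 1 ≤ n)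
    (hj : j ≤ n) :
    ((∏ i ∈ Finset.Icc 1 n,
        (Polynomial.X - Polynomial.C (2 * (i : ℤ) - 1))).coeff j).natAbs =
      Nat.card {π : Equiv.Perm (Fin n × Bool) //
        (∀ x, π (negate x) = negate (π x)) ∧ oddCycleCount π = j} :=
  abs_coeff_eq_card_signed_perms_odd_cycles_general n j
end
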